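/- arXiv:math/0307082 — 6 statements merged into one kernel-verified Lean document; each statement's English description precedes it below -/
import Mathlib

section
/- Suppose bc ≥ 4. Then the cluster variables y_m, m ∈ ℤ, are pairwise distinct elements of F. -/
/-!
The orders of `y m` along `y₁ = 0` and `y₂ = 0` obey the tropical form of the exchange relation:
if `ord (y m) < 0` then `ord (y (m - 1)) + ord (y (m + 1)) = e * ord (y m)`. So, up to sign, they are
denominator vectors `d` solving `d (k + 2) = e k • d (k + 1) - d k`, from `(1, 0), (b, 1)` for
`m ≥ 3`, and with `b, c` and the two coordinates exchanged for `m ≤ 0`.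
When `b c ≥ 4`, this recurrence keeps a linear form of `d` nonnegative as soon as
`2 x 0 ≤ e 0 * x 1` and `e 1 * x 0 ≤ 2 * x 1`. Applied to `det (d j, ·)` this shows that the
vectors turn strictly counterclockwise, so they are pairwise distinct; applied to `2 x - b y` it
gives `b y < 2 x` on the first family and `c x < 2 y` on the second, incompatible as `b c ≥ 4`.
-/


open MvPolynomial Finset

noncomputable section

/-- The ambient field `F = ℚ(y₁, y₂)`. -/
abbrev Fq : Type := FractionRing (MvPolynomial (Fin 2) ℚ)

/-- The two independent indeterminates of `F`. -/
def gen (i : Fin 2) : Fq := algebraMap (MvPolynomial (Fin 2) ℚ) Fq (X i)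

/-- `y : ℤ → Fq` is the family of cluster variables of `A(b,c)`:
`y 1, y 2` are the two indeterminates and the exchange relations hold. -/
def IsClusterSeq (b c : ℕ) (y : ℤ → Fq) : Prop :=
  y 1 = gen 0 ∧ y 2 = gen 1 ∧
    ∀ m : ℤ, y (m - 1) * y (m + 1) = (if Odd m then y m ^ b else y m ^ c) + 1

/-- The cluster algebra `A(b,c)`: the subring of `F` generated by all cluster variables. -/
def clusterAlg (y : ℤ → Fq) : Subring Fq := Subring.closure (Set.range y)

/-- The cluster variable `y m` as an element of the cluster algebra. -/
def yMem (y : ℤ → Fq) (m : ℤ) : clusterAlg y := ⟨y m, Subring.subset_closure ⟨m, rfl⟩⟩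

/-- `f` is (the coefficient function of) a Laurent-polynomial expansion of `x`
in the cluster `{y m, y (m+1)}`. -/
def IsLaurentExp (y : ℤ → Fq) (m : ℤ) (f : ℤ × ℤ →₀ ℤ) (x : Fq) : Prop :=
  x = ∑ γ ∈ f.support, (f γ : Fq) * y m ^ γ.1 * y (m + 1) ^ γ.2

/-- `x` is a positive element: it is nonzero and for every `m` its Laurent expansion in
`y m, y (m+1)` has nonnegative coefficients. -/
def IsPositive (y : ℤ → Fq) (x : Fq) : Prop :=
  x ≠ 0 ∧ ∀ m : ℤ, ∃ f : ℤ × ℤ →₀ ℤ, (∀ γ, 0 ≤ f γ) ∧ IsLaurentExp y m f x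

/-- `x` is a cluster monomial `y m ^ p * y (m+1) ^ q`. -/
def IsClusterMonomial (y : ℤ → Fq) (x : Fq) : Prop :=
  ∃ (m : ℤ) (p q : ℕ), x = y m ^ p * y (m + 1) ^ q

/-- `x` has denominator vector `a = (a₁, a₂)`, i.e. `x = N(y₁,y₂)/(y₁^a₁ y₂^a₂)` with
`N ∈ ℤ[y₁,y₂]` having constant term `1`. -/
def HasDenomVector (y : ℤ → Fq) (a : ℤ × ℤ) (x : Fq) : Prop :=
  ∃ N : MvPolynomial (Fin 2) ℤ, N.coeff 0 = 1 ∧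
    x = MvPolynomial.aeval (fun i : Fin 2 => if i = 0 then y 1 else y 2) N /
        (y 1 ^ a.1 * y 2 ^ a.2)

/-- `B` is a basis of the subring `A` as a `ℤ`-module. -/
def IsZBasisOf (B : Set Fq) (A : Subring Fq) : Prop :=
  LinearIndependent ℤ (fun x : B => (x : Fq)) ∧
    (Submodule.span ℤ B : Set Fq) = (A : Set Fq)

/-- `x` is a finite linear combination of elements of `B` with nonnegative integer
coefficients. -/
def IsNonnegComb (B : Set Fq) (x : Fq) : Prop :=
  ∃ f : Fq →₀ ℕ, ↑f.support ⊆ B ∧ x = f.sum fun v n => n • v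

/-- Normalized Chebyshev polynomials: `T₀ = 1`, `T₁ = t`, `T₂ = t² - 2`,
`T_{n+1} = t T_n - T_{n-1}` for `n ≥ 2`, so `T_n(t + t⁻¹) = tⁿ + t⁻ⁿ` for `n ≥ 1`. -/
def cheb : ℕ → Polynomial ℤ
  | 0 => 1
  | 1 => Polynomial.X
  | 2 => Polynomial.X ^ 2 - 2
  | n + 3 => Polynomial.X * cheb (n + 2) - cheb (n + 1)

/-- The element `z` in the affine cases: `z = y₀y₃ - y₁y₂` for `(b,c) = (2,2)` and
`z = y₀²y₃ - (y₁+2)y₂²` for `(b,c) = (1,4)`. -/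
def zElem (b : ℕ) (y : ℤ → Fq) : Fq :=
  if b = 2 then y 0 * y 3 - y 1 * y 2
  else y 0 ^ 2 * y 3 - (y 1 + 2) * y 2 ^ 2

/-- `z_n = T_n(z)` (so `z_0 = 1`). -/
def zn (b : ℕ) (y : ℤ → Fq) (n : ℕ) : Fq := Polynomial.aeval (zElem b y) (cheb n)

/-- `z_j` for integer index, with the convention `z_j = 0` for `j < 0`. -/
def znI (b : ℕ) (y : ℤ → Fq) (j : ℤ) : Fq := if j < 0 then 0 else zn b y j.toNat

/-- A lattice point viewed in `ℝ²`. -/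
def toR (γ : ℤ × ℤ) : ℝ × ℝ := ((γ.1 : ℝ), (γ.2 : ℝ))

/-- The Newton polygon of a Laurent expansion: the convex hull of its support. -/
def newt (f : ℤ × ℤ →₀ ℤ) : Set (ℝ × ℝ) := convexHull ℝ (toR '' ↑f.support)

/-- The expansion `f` is monic: every vertex (extreme point) of its Newton polygon
carries coefficient `1`. -/
def IsMonicExp (f : ℤ × ℤ →₀ ℤ) : Prop :=
  ∀ γ : ℤ × ℤ, toR γ ∈ Set.extremePoints ℝ (newt f) → f γ = 1

/-- The triangle `Δ(a)` with vertices `(-a₁,-a₂)`, `(-a₁+b a₂, -a₂)`, `(-a₁, -a₂+c a₁)`. -/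
def tri (b c : ℕ) (a : ℤ × ℤ) : Set (ℝ × ℝ) :=
  convexHull ℝ
    {toR (-a.1, -a.2), toR (-a.1 + (b : ℤ) * a.2, -a.2), toR (-a.1, -a.2 + (c : ℤ) * a.1)}

/-- The simple reflection `s₁`. -/
def s1 (b : ℕ) (v : ℤ × ℤ) : ℤ × ℤ := (-v.1 + (b : ℤ) * v.2, v.2)

/-- The simple reflection `s₂`. -/
def s2 (c : ℕ) (v : ℤ × ℤ) : ℤ × ℤ := (v.1, (c : ℤ) * v.1 - v.2)

/-- `a` is a positive real root: it has nonnegative coordinates and lies in the orbit of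
`(1,0)` or `(0,1)` under the group generated by `s₁` and `s₂` (since `s₁, s₂` are
involutions, this orbit is the set of values of words in `s₁, s₂` applied to `(1,0)`
or `(0,1)`). -/
def IsPosRealRoot (b c : ℕ) (a : ℤ × ℤ) : Prop :=
  0 ≤ a.1 ∧ 0 ≤ a.2 ∧
    ∃ (w : List Bool) (e : ℤ × ℤ), (e = (1, 0) ∨ e = (0, 1)) ∧
      a = w.foldr (fun t v => if t then s1 b v else s2 c v) e

/-- `a` is a positive imaginary root. -/
def IsPosImagRoot (b c : ℕ) (a : ℤ × ℤ) : Prop :=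
  0 < a.1 ∧ 0 < a.2 ∧ (c : ℤ) * a.1 ^ 2 - (b : ℤ) * c * a.1 * a.2 + (b : ℤ) * a.2 ^ 2 ≤ 0

def LinRec (e x : ℕ → ℤ) : Prop := ∀ k, x (k + 2) = e k * x (k + 1) - x k

namespace LinRec

variable {e x : ℕ → ℤ}

theorem invariant (hx : LinRec e x) (he : ∀ k, 0 < e k) (he2 : ∀ k, e (k + 2) = e k)
    (he4 : ∀ k, 4 ≤ e k * e (k + 1)) (h0 : 0 ≤ x 0) (h01 : 2 * x 0 ≤ e 0 * x 1)
    (h10 : e 1 * x 0 ≤ 2 * x 1) (k : ℕ) :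
    0 ≤ x k ∧ 2 * x k ≤ e k * x (k + 1) ∧ e (k + 1) * x k ≤ 2 * x (k + 1) := by
  induction k with
  | zero => exact ⟨h0, h01, h10⟩
  | succ k ih =>
    obtain ⟨hk, hk01, hk10⟩ := ih
    have hk1 : 0 ≤ x (k + 1) := by nlinarith [he (k + 1)]
    have hprod := mul_le_mul_of_nonneg_right (he4 k) hk1
    refine ⟨hk1, ?_, ?_⟩
    -- `e (k + 1) * x (k + 2) ≥ 4 x (k + 1) - e (k + 1) * x k ≥ 2 x (k + 1)`
    · rw [hx k]; nlinarith
    · rw [hx k, he2 k]; nlinarith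

theorem pos (hx : LinRec e x) (he : ∀ k, 0 < e k) (he2 : ∀ k, e (k + 2) = e k)
    (he4 : ∀ k, 4 ≤ e k * e (k + 1)) (h0 : 0 ≤ x 0) (h01 : 2 * x 0 ≤ e 0 * x 1)
    (h10 : e 1 * x 0 ≤ 2 * x 1) {j : ℕ} (hj : 0 < x j) {k : ℕ} (hjk : j ≤ k) : 0 < x k := by
  induction k, hjk using Nat.le_induction with
  | base => exact hj
  | succ k _ ih =>
    have := (hx.invariant he he2 he4 h0 h01 h10 k).2.2
    nlinarith [he (k + 1)]

end LinRec

/-- The exponent of the exchange relation `y (k + 3) * y (k + 5) = y (k + 4) ^ exchExp b c k + 1`;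
going down from `y 0` the exponents are `exchExp c b`. -/
def exchExp (b c : ℕ) (k : ℕ) : ℕ := if Even k then c else b

/-- The denominator vector of `y (k + 3)`. -/
def denom (b c : ℕ) : ℕ → ℤ × ℤ
  | 0 => (1, 0)
  | 1 => (b, 1)
  | k + 2 => (exchExp b c k : ℤ) • denom b c (k + 1) - denom b c k

/-- The denominator vector of `y m`; the `y m` with `m ≤ 0` are, read downwards, the cluster
variables of `A(c, b)` with `y₁` and `y₂` exchanged. -/
def denomVec (b c : ℕ) (m : ℤ) : ℤ × ℤ :=
  if 3 ≤ m then denom b c (m - 3).toNat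
  else if m ≤ 0 then (denom c b (-m).toNat).swap
  else if m = 1 then (-1, 0) else (0, -1)

section Denom

variable {b c : ℕ}

theorem exchExp_add_two (k : ℕ) : exchExp b c (k + 2) = exchExp b c k := by
  simp [exchExp, Nat.even_add_one]

theorem exchExp_mul_exchExp_succ (k : ℕ) : exchExp b c k * exchExp b c (k + 1) = b * c := by
  by_cases hk : Even k <;> simp [exchExp, hk, Nat.even_add_one, mul_comm]

theorem exchExp_pos (hbc : 4 ≤ b * c) (k : ℕ) : 0 < exchExp b c k := by
  refine Nat.pos_of_ne_zero fun h => ?_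
  have := exchExp_mul_exchExp_succ (b := b) (c := c) k
  rw [h, zero_mul] at this
  omega

theorem linRec_denom (α β : ℤ) (j : ℕ) :
    LinRec (fun k => exchExp b c (j + k))
      (fun k => α * (denom b c (j + k)).1 + β * (denom b c (j + k)).2) := by
  intro k
  dsimp only
  rw [show j + (k + 2) = j + k + 2 by omega, ← add_assoc]
  simp only [denom, Prod.fst_sub, Prod.snd_sub, Prod.smul_fst, Prod.smul_snd, smul_eq_mul]
  ring

theorem denom_form_pos (hbc : 4 ≤ b * c) {α β : ℤ} {j : ℕ}
    (h0 : 0 ≤ α * (denom b c j).1 + β * (denom b c j).2)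
    (h01 : 2 * (α * (denom b c j).1 + β * (denom b c j).2) ≤
      exchExp b c j * (α * (denom b c (j + 1)).1 + β * (denom b c (j + 1)).2))
    (h10 : exchExp b c (j + 1) * (α * (denom b c j).1 + β * (denom b c j).2) ≤
      2 * (α * (denom b c (j + 1)).1 + β * (denom b c (j + 1)).2))
    {i : ℕ} (hi : 0 < α * (denom b c (j + i)).1 + β * (denom b c (j + i)).2)
    {k : ℕ} (hik : i ≤ k) : 0 < α * (denom b c (j + k)).1 + β * (denom b c (j + k)).2 :=
  (linRec_denom α β j).pos (fun k => by exact_mod_cast exchExp_pos hbc (j + k))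
    (fun k => by simp only [show j + (k + 2) = j + k + 2 by omega, exchExp_add_two])
    (fun k => by
      rw [← add_assoc]
      exact_mod_cast (exchExp_mul_exchExp_succ (b := b) (c := c) (j + k)) ▸ hbc)
    h0 h01 h10 hi hik

theorem denom_det_succ (k : ℕ) :
    -(denom b c k).2 * (denom b c (k + 1)).1 + (denom b c k).1 * (denom b c (k + 1)).2 = 1 := by
  induction k with
  | zero => simp [denom]
  | succ k ih =>
    simp only [denom, Prod.fst_sub, Prod.snd_sub, Prod.smul_fst, Prod.smul_snd, smul_eq_mul]
    linear_combination ih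

theorem denom_det_pos (hbc : 4 ≤ b * c) (j : ℕ) {l : ℕ} (hl : 0 < l) :
    0 < -(denom b c j).2 * (denom b c (j + l)).1 + (denom b c j).1 * (denom b c (j + l)).2 := by
  have hdet := denom_det_succ (b := b) (c := c) j
  refine denom_form_pos hbc (le_of_eq (by simp; ring)) ?_ ?_ (i := 1) (by rw [hdet]; norm_num) hl
  · simp only [hdet]; ring_nf; positivity
  · simp only [hdet]; ring_nf; norm_num

theorem denom_fst_pos (hbc : 4 ≤ b * c) (k : ℕ) : 0 < (denom b c k).1 := by
  have hbc' : (4 : ℤ) ≤ b * c := by exact_mod_cast hbc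
  simpa using denom_form_pos (α := 1) (β := 0) (j := 0) (i := 0) hbc
    (by simp [denom]) (by simp [denom, exchExp]; linarith) (by simp [denom, exchExp]; omega)
    (by simp [denom]) (Nat.zero_le k)

theorem denom_snd_pos (hbc : 4 ≤ b * c) (k : ℕ) : 0 < (denom b c (k + 1)).2 := by
  simpa [denom] using denom_det_pos hbc 0 (Nat.succ_pos k)

theorem denom_injective (hbc : 4 ≤ b * c) : Function.Injective (denom b c) := by
  intro j k h
  wlog hjk : j < k generalizing j k
  · rcases (not_lt.1 hjk).eq_or_lt with h' | h'
    exacts [h'.symm, (this h.symm h').symm]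
  have := denom_det_pos hbc j (Nat.sub_pos_of_lt hjk)
  rw [Nat.add_sub_cancel' hjk.le, ← h] at this
  linarith

theorem mul_denom_snd_lt (hbc : 4 ≤ b * c) (k : ℕ) :
    (b : ℤ) * (denom b c k).2 < 2 * (denom b c k).1 := by
  have hbc' : (4 : ℤ) ≤ b * c := by exact_mod_cast hbc
  have := denom_form_pos (α := 2) (β := -b) (j := 0) (i := 0) hbc
    (by simp [denom]) (by simp [denom, exchExp]; linarith) (by simp [denom, exchExp]; linarith)
    (by simp [denom]) (Nat.zero_le k)
  simp only [zero_add] at this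
  linarith

theorem denom_ne_swap_denom (hbc : 4 ≤ b * c) (k l : ℕ) : denom b c k ≠ (denom c b l).swap := by
  intro h
  have h1 := mul_denom_snd_lt hbc k
  have h2 := mul_denom_snd_lt (by rwa [mul_comm] : 4 ≤ c * b) l
  have h3 := denom_fst_pos hbc k
  have hbc' : (4 : ℤ) ≤ b * c := by exact_mod_cast hbc
  simp only [h, Prod.fst_swap, Prod.snd_swap] at h1 h3
  nlinarith

theorem denomVec_cases (b c : ℕ) (m : ℤ) :
    (3 ≤ m ∧ denomVec b c m = denom b c (m - 3).toNat) ∨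
    (m ≤ 0 ∧ denomVec b c m = (denom c b (-m).toNat).swap) ∨
    (m = 1 ∧ denomVec b c m = (-1, 0)) ∨ (m = 2 ∧ denomVec b c m = (0, -1)) := by
  unfold denomVec
  split_ifs with h3 h0 h1
  · exact Or.inl ⟨h3, rfl⟩
  · exact Or.inr (Or.inl ⟨h0, rfl⟩)
  · exact Or.inr (Or.inr (Or.inl ⟨h1, rfl⟩))
  · exact Or.inr (Or.inr (Or.inr ⟨by omega, rfl⟩))

theorem denomVec_injective (hbc : 4 ≤ b * c) : Function.Injective (denomVec b c) := by
  have hcb : 4 ≤ c * b := by rwa [mul_comm]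
  intro m n h
  rcases denomVec_cases b c m with ⟨hm, hD⟩ | ⟨hm, hD⟩ | ⟨rfl, hD⟩ | ⟨rfl, hD⟩ <;>
  rcases denomVec_cases b c n with ⟨hn, hD'⟩ | ⟨hn, hD'⟩ | ⟨rfl, hD'⟩ | ⟨rfl, hD'⟩
  all_goals try rfl
  all_goals rw [hD, hD'] at h
  · have := denom_injective hbc h; omega
  · exact absurd h (denom_ne_swap_denom hbc _ _)
  · have := denom_fst_pos hbc (m - 3).toNat; simp [Prod.ext_iff] at h; omega
  · have := denom_fst_pos hbc (m - 3).toNat; simp [Prod.ext_iff] at h; omega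
  · exact absurd h.symm (denom_ne_swap_denom hbc _ _)
  · have := denom_injective hcb (Prod.swap_injective h); omega
  · have := denom_fst_pos hcb (-m).toNat; simp [Prod.ext_iff] at h; omega
  · have := denom_fst_pos hcb (-m).toNat; simp [Prod.ext_iff] at h; omega
  · have := denom_fst_pos hbc (n - 3).toNat; simp [Prod.ext_iff] at h; omega
  · have := denom_fst_pos hcb (-n).toNat; simp [Prod.ext_iff] at h; omega
  · simp at h
  · have := denom_fst_pos hbc (n - 3).toNat; simp [Prod.ext_iff] at h; omega
  · have := denom_fst_pos hcb (-n).toNat; simp [Prod.ext_iff] at h; omega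
  · simp at h

end Denom

section Order

variable {R K : Type*} [CommRing R] [Field K] [Algebra R K] [IsFractionRing R K]

def HasOrd (p : R) (n : ℤ) (f : K) : Prop :=
  ∃ a b : R, ¬ p ∣ a ∧ ¬ p ∣ b ∧ f * algebraMap R K b = algebraMap R K a * algebraMap R K p ^ n

variable {p : R} {f g h : K} {n m : ℤ}

theorem algebraMap_ne_zero_of_prime (hp : Prime p) : algebraMap R K p ≠ 0 :=
  IsFractionRing.to_map_eq_zero_iff.not.2 hp.ne_zero

theorem HasOrd.of_mul_zpow_eq (hp : Prime p) {u a : R} (hu : ¬ p ∣ u) (ha : ¬ p ∣ a)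
    (h : f * algebraMap R K u * algebraMap R K p ^ n = algebraMap R K a) : HasOrd p (-n) f := by
  have hP : algebraMap R K p ≠ 0 := algebraMap_ne_zero_of_prime hp
  exact ⟨a, u, ha, hu, by rw [← h, zpow_neg, mul_inv_cancel_right₀ (zpow_ne_zero n hP)]⟩

theorem HasOrd.unique (hp : Prime p) (hn : HasOrd p n f) (hm : HasOrd p m f) : n = m := by
  wlog hlt : n < m generalizing n m
  · rcases (not_lt.1 hlt).eq_or_lt with h | h
    exacts [h.symm, (this hm hn h).symm]
  obtain ⟨a, b, ha, hb, hf⟩ := hn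
  obtain ⟨a', b', ha', hb', hf'⟩ := hm
  obtain ⟨k, rfl⟩ : ∃ k : ℕ, m = n + (k + 1 : ℕ) := ⟨(m - n - 1).toNat, by omega⟩
  have hP : algebraMap R K p ≠ 0 := algebraMap_ne_zero_of_prime hp
  have hab : a * b' = a' * b * p ^ (k + 1) := by
    apply IsFractionRing.injective R K
    apply mul_right_cancel₀ (zpow_ne_zero n hP)
    rw [zpow_add₀ hP, zpow_natCast] at hf'
    simp only [map_mul, map_pow]
    linear_combination (algebraMap R K b) * hf' - (algebraMap R K b') * hf
  exact (hp.not_dvd_mul ha hb' (hab ▸ dvd_mul_of_dvd_right (dvd_pow_self p k.succ_ne_zero) _)).elim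

theorem HasOrd.mul (hp : Prime p) (hf : HasOrd p n f) (hg : HasOrd p m g) :
    HasOrd p (n + m) (f * g) := by
  obtain ⟨a, b, ha, hb, hf⟩ := hf
  obtain ⟨a', b', ha', hb', hg⟩ := hg
  refine ⟨a * a', b * b', hp.not_dvd_mul ha ha', hp.not_dvd_mul hb hb', ?_⟩
  rw [map_mul, map_mul, zpow_add₀ (algebraMap_ne_zero_of_prime hp)]
  linear_combination (g * algebraMap R K b') * hf + algebraMap R K a * algebraMap R K p ^ n * hg

theorem HasOrd.pow (hp : Prime p) (hf : HasOrd p n f) (e : ℕ) : HasOrd p (e * n) (f ^ e) := by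
  induction e with
  | zero => exact ⟨1, 1, hp.not_dvd_one, hp.not_dvd_one, by simp⟩
  | succ e ih => simpa [add_mul, pow_succ] using ih.mul hp hf

theorem HasOrd.add_of_lt (hp : Prime p) (hf : HasOrd p n f) (hg : HasOrd p m g) (hnm : n < m) :
    HasOrd p n (f + g) := by
  obtain ⟨a, b, ha, hb, hf⟩ := hf
  obtain ⟨a', b', ha', hb', hg⟩ := hg
  obtain ⟨k, rfl⟩ : ∃ k : ℕ, m = n + (k + 1 : ℕ) := ⟨(m - n - 1).toNat, by omega⟩
  have hpk : p ∣ a' * b * p ^ (k + 1) := dvd_mul_of_dvd_right (dvd_pow_self p k.succ_ne_zero) _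
  refine ⟨a * b' + a' * b * p ^ (k + 1), b * b', fun hdvd => ?_, hp.not_dvd_mul hb hb', ?_⟩
  · exact hp.not_dvd_mul ha hb' ((dvd_add_left hpk).1 hdvd)
  · rw [zpow_add₀ (algebraMap_ne_zero_of_prime hp), zpow_natCast] at hg
    simp only [map_mul, map_add, map_pow]
    linear_combination (algebraMap R K b') * hf + (algebraMap R K b) * hg

theorem HasOrd.of_mul_eq (hp : Prime p) (hf : HasOrd p n f) (hh : HasOrd p m h)
    (hfg : f * g = h) : HasOrd p (m - n) g := by
  obtain ⟨a, b, ha, hb, hf⟩ := hf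
  obtain ⟨a', b', ha', hb', hh⟩ := hh
  have hP : algebraMap R K p ≠ 0 := algebraMap_ne_zero_of_prime hp
  refine ⟨a' * b, b' * a, hp.not_dvd_mul ha' hb, hp.not_dvd_mul hb' ha, ?_⟩
  apply mul_right_cancel₀ (zpow_ne_zero n hP)
  have hpow : algebraMap R K p ^ (m - n) * algebraMap R K p ^ n = algebraMap R K p ^ m := by
    rw [← zpow_add₀ hP, sub_add_cancel]
  rw [map_mul, map_mul]
  linear_combination (-(g * algebraMap R K b')) * hf + (algebraMap R K b' * algebraMap R K b) * hfg
    + algebraMap R K b * hh - (algebraMap R K a' * algebraMap R K b) * hpow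

theorem HasOrd.pow_add_one (hp : Prime p) (hf : HasOrd p n f) (hn : n < 0) {e : ℕ} (he : 0 < e) :
    HasOrd p (e * n) (f ^ e + 1) :=
  (hf.pow hp e).add_of_lt hp (m := 0) ⟨1, 1, hp.not_dvd_one, hp.not_dvd_one, by simp⟩
    (mul_neg_of_pos_of_neg (by exact_mod_cast he) hn)

theorem hasOrd_of_exchange (hp : Prime p) {z : ℕ → K} {e : ℕ → ℕ} {a : ℕ → ℤ}
    (hz : ∀ k, z k * z (k + 2) = z (k + 1) ^ e k + 1) (he : ∀ k, 0 < e k)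
    (ha : ∀ k, a (k + 2) = e k * a (k + 1) - a k) (hneg : ∀ k, a (k + 1) < 0)
    (h0 : HasOrd p (a 0) (z 0)) (h1 : HasOrd p (a 1) (z 1)) (k : ℕ) : HasOrd p (a k) (z k) := by
  suffices ∀ k, HasOrd p (a k) (z k) ∧ HasOrd p (a (k + 1)) (z (k + 1)) from (this k).1
  intro k
  induction k with
  | zero => exact ⟨h0, h1⟩
  | succ k ih =>
    refine ⟨ih.2, ?_⟩
    rw [ha]
    exact ih.1.of_mul_eq hp (ih.2.pow_add_one hp (hneg k) (he k)) (hz k)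

end Order

theorem MvPolynomial.X_not_dvd_of_eval {σ R : Type*} [CommSemiring R] {i : σ}
    {a : MvPolynomial σ R} (v : σ → R) (hv : v i = 0) (ha : eval v a ≠ 0) : ¬ X i ∣ a := by
  rintro ⟨q, rfl⟩
  simp [hv] at ha

def HasOrdVec (v : ℤ × ℤ) (f : Fq) : Prop :=
  HasOrd (X 0 : MvPolynomial (Fin 2) ℚ) v.1 f ∧ HasOrd (X 1 : MvPolynomial (Fin 2) ℚ) v.2 f

theorem HasOrdVec.unique {v w : ℤ × ℤ} {f : Fq} (hv : HasOrdVec v f) (hw : HasOrdVec w f) :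
    v = w :=
  Prod.ext (hv.1.unique X_prime hw.1) (hv.2.unique X_prime hw.2)

theorem hasOrdVec_of_exchange {z : ℕ → Fq} {e : ℕ → ℕ} {a : ℕ → ℤ × ℤ}
    (hz : ∀ k, z k * z (k + 2) = z (k + 1) ^ e k + 1) (he : ∀ k, 0 < e k)
    (ha : ∀ k, a (k + 2) = (e k : ℤ) • a (k + 1) - a k)
    (hneg : ∀ k, (a (k + 1)).1 < 0 ∧ (a (k + 1)).2 < 0)
    (h0 : HasOrdVec (a 0) (z 0)) (h1 : HasOrdVec (a 1) (z 1)) (k : ℕ) : HasOrdVec (a k) (z k) :=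
  ⟨hasOrd_of_exchange X_prime (a := fun k => (a k).1) hz he (fun k => by simp [ha k])
      (fun k => (hneg k).1) h0.1 h1.1 k,
    hasOrd_of_exchange X_prime (a := fun k => (a k).2) hz he (fun k => by simp [ha k])
      (fun k => (hneg k).2) h0.2 h1.2 k⟩

theorem hasOrdVec_gen_zero : HasOrdVec (1, 0) (gen 0) :=
  ⟨⟨1, 1, X_prime.not_dvd_one, X_prime.not_dvd_one, by simp [gen]⟩,
    ⟨X 0, 1, X_not_dvd_of_eval ![1, 0] rfl (by simp), X_prime.not_dvd_one, by simp [gen]⟩⟩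

theorem hasOrdVec_gen_one : HasOrdVec (0, 1) (gen 1) :=
  ⟨⟨X 1, 1, X_not_dvd_of_eval ![0, 1] rfl (by simp), X_prime.not_dvd_one, by simp [gen]⟩,
    ⟨1, 1, X_prime.not_dvd_one, X_prime.not_dvd_one, by simp [gen]⟩⟩

theorem hasOrdVec_of_mul_eq {f : Fq} {p q : ℕ} {a : MvPolynomial (Fin 2) ℚ}
    (h : f * (gen 0 ^ p * gen 1 ^ q) = algebraMap _ Fq a) (h0 : eval ![0, 1] a ≠ 0)
    (h1 : eval ![1, 0] a ≠ 0) : HasOrdVec (-p, -q) f := by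
  constructor
  · refine HasOrd.of_mul_zpow_eq X_prime (u := X 1 ^ q) ?_ (X_not_dvd_of_eval _ rfl h0) ?_
    · exact X_not_dvd_of_eval ![0, 1] rfl (by simp)
    · rw [← h, zpow_natCast, map_pow, gen, gen]; ring
  · refine HasOrd.of_mul_zpow_eq X_prime (u := X 0 ^ p) ?_ (X_not_dvd_of_eval _ rfl h1) ?_
    · exact X_not_dvd_of_eval ![1, 0] rfl (by simp)
    · rw [← h, zpow_natCast, map_pow, gen, gen]; ring

namespace IsClusterSeq

variable {b c : ℕ} {y : ℤ → Fq}

theorem exchange_forward (hy : IsClusterSeq b c y) (k : ℕ) :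
    y (k + 3) * y ((k + 2 : ℕ) + 3) = y ((k + 1 : ℕ) + 3) ^ exchExp b c k + 1 := by
  have h := hy.2.2 (k + 1 + 3)
  have hodd : Odd ((k : ℤ) + 1 + 3) ↔ ¬ Even k := by
    rw [show (k : ℤ) + 1 + 3 = ((k + 4 : ℕ) : ℤ) by push_cast; ring, Int.odd_coe_nat]
    simp [Nat.even_add_one, parity_simps]
  push_cast
  rw [show (k : ℤ) + 1 + 3 - 1 = k + 3 by ring, show (k : ℤ) + 1 + 3 + 1 = k + 2 + 3 by ring] at h
  rw [h, exchExp]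
  by_cases hk : Even k
  · rw [if_neg (not_not_intro hk ∘ hodd.1), if_pos hk]
  · rw [if_pos (hodd.2 hk), if_neg hk]

theorem exchange_backward (hy : IsClusterSeq b c y) (k : ℕ) :
    y (-k) * y (-(k + 2 : ℕ)) = y (-(k + 1 : ℕ)) ^ exchExp c b k + 1 := by
  have h := hy.2.2 (-(k + 1 : ℕ))
  have hodd : Odd (-((k : ℤ) + 1)) ↔ Even k := by simp [parity_simps]
  push_cast at h ⊢
  rw [show -((k : ℤ) + 1) - 1 = -(k + 2) by ring, show -((k : ℤ) + 1) + 1 = -k by ring] at h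
  rw [mul_comm, h, exchExp]
  by_cases hk : Even k
  · rw [if_pos (hodd.2 hk), if_pos hk]
  · rw [if_neg (mt hodd.1 hk), if_neg hk]

theorem three_mul_gen_zero (hy : IsClusterSeq b c y) : y 3 * gen 0 = gen 1 ^ c + 1 := by
  have h := hy.2.2 2
  norm_num [← hy.1, ← hy.2.1] at h ⊢
  rw [mul_comm, h]

theorem four_mul_gen (hy : IsClusterSeq b c y) :
    y 4 * (gen 0 ^ b * gen 1) = (gen 1 ^ c + 1) ^ b + gen 0 ^ b := by
  have h := hy.2.2 3
  norm_num [← hy.2.1] at h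
  rw [← hy.three_mul_gen_zero, ← hy.2.1]
  linear_combination (gen 0 ^ b) * h

theorem zero_mul_gen_one (hy : IsClusterSeq b c y) : y 0 * gen 1 = gen 0 ^ b + 1 := by
  have h := hy.2.2 1
  norm_num [← hy.1, ← hy.2.1] at h ⊢
  exact h

theorem neg_one_mul_gen (hy : IsClusterSeq b c y) :
    y (-1) * (gen 0 * gen 1 ^ c) = (gen 0 ^ b + 1) ^ c + gen 1 ^ c := by
  have h := hy.2.2 0
  norm_num [← hy.1] at h
  rw [← hy.zero_mul_gen_one, ← hy.1]
  linear_combination (gen 1 ^ c) * h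


theorem hasOrdVec_forward (hbc : 4 ≤ b * c) (hy : IsClusterSeq b c y) (k : ℕ) :
    HasOrdVec (-denom b c k) (y (k + 3)) := by
  refine hasOrdVec_of_exchange (z := fun k : ℕ => y (k + 3))
    (a := fun k => -denom b c k) hy.exchange_forward (exchExp_pos hbc)
    (fun k => by rw [denom, smul_neg]; abel) (fun k => ?_) ?_ ?_ k
  · simpa using ⟨denom_fst_pos hbc (k + 1), denom_snd_pos hbc k⟩
  · simpa [denom] using hasOrdVec_of_mul_eq (p := 1) (q := 0) (a := X 1 ^ c + 1)
      (by simpa [gen] using hy.three_mul_gen_zero) (by simp) (by simp; positivity)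
  · simpa [denom] using hasOrdVec_of_mul_eq (p := b) (q := 1) (a := (X 1 ^ c + 1) ^ b + X 0 ^ b)
      (by simpa [gen] using hy.four_mul_gen) (by simp; positivity) (by simp; positivity)

theorem hasOrdVec_backward (hbc : 4 ≤ b * c) (hy : IsClusterSeq b c y) (k : ℕ) :
    HasOrdVec (-(denom c b k).swap) (y (-k)) := by
  have hcb : 4 ≤ c * b := by rwa [mul_comm]
  refine hasOrdVec_of_exchange (z := fun k : ℕ => y (-k))
    (a := fun k => -(denom c b k).swap) hy.exchange_backward (exchExp_pos hcb)
    (fun k => by rw [denom]; ext <;> simp <;> ring) (fun k => ?_) ?_ ?_ k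
  · simpa using ⟨denom_snd_pos hcb k, denom_fst_pos hcb (k + 1)⟩
  · simpa [denom] using hasOrdVec_of_mul_eq (p := 0) (q := 1) (a := X 0 ^ b + 1)
      (by simpa [gen] using hy.zero_mul_gen_one) (by simp; positivity) (by simp)
  · simpa [denom] using hasOrdVec_of_mul_eq (p := 1) (q := c) (a := (X 0 ^ b + 1) ^ c + X 1 ^ c)
      (by simpa [gen] using hy.neg_one_mul_gen) (by simp; positivity) (by simp; positivity)

theorem hasOrdVec_denomVec (hbc : 4 ≤ b * c) (hy : IsClusterSeq b c y) (m : ℤ) :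
    HasOrdVec (-denomVec b c m) (y m) := by
  rcases denomVec_cases b c m with ⟨hm, hD⟩ | ⟨hm, hD⟩ | ⟨rfl, hD⟩ | ⟨rfl, hD⟩ <;> rw [hD]
  · convert hy.hasOrdVec_forward hbc (m - 3).toNat using 2
    omega
  · convert hy.hasOrdVec_backward hbc (-m).toNat using 2
    omega
  · simpa [hy.1] using hasOrdVec_gen_zero
  · simpa [hy.2.1] using hasOrdVec_gen_one

end IsClusterSeq

theorem stmt_1_general (b c : ℕ) (hbc : 4 ≤ b * c)
    (y : ℤ → Fq) (hy : IsClusterSeq b c y) :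
    Function.Injective y := by
  intro m n h
  have hm := hy.hasOrdVec_denomVec hbc m
  rw [h] at hm
  exact denomVec_injective hbc (neg_injective (hm.unique (hy.hasOrdVec_denomVec hbc n)))

/-- if `bc ≥ 4` then the cluster variables `y m` are pairwise distinct. -/
theorem stmt_1 (b c : ℕ) (hb : 0 < b) (hc : 0 < c) (hbc : 4 ≤ b * c)
    (y : ℤ → Fq) (hy : IsClusterSeq b c y) :
    Function.Injective y :=
  stmt_1_general b c hbc y hy
end
end

section
/- For arbitrary positive integers b, c and every p ∈ ℤ, there exists a unique ring automorphism σ_p of A(b,c) satisfying σ_p(y_m) = y_{2p−m} for all m ∈ ℤ; moreover σ_p is an involution and maps positive elements of A(b,c) to positive elements. -/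
open MvPolynomial Finset

noncomputable section

section Stmt4Aux

set_option maxHeartbeats 1000000 in
lemma stmt4_pair_swap {u v : Fq} (h : AlgebraicIndependent ℚ ![u, v]) :
    AlgebraicIndependent ℚ ![v, u] := by
  have := h.comp ![1, 0] (by decide)
  convert this using 1
  funext i; fin_cases i <;> rfl

set_option maxHeartbeats 1000000 in
set_option synthInstance.maxHeartbeats 400000 in
lemma stmt4_transc_mul {K : Subalgebra ℚ Fq} {u w q : Fq} (hq : q ∈ K) (hq0 : q ≠ 0)
    (huw : u * w = q) (htu : Transcendental K u) : Transcendental K w := by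
  intro halg
  obtain ⟨p, hp0, hpw⟩ := halg
  set n := p.natDegree with hn
  apply htu
  refine ⟨∑ i ∈ Finset.range (n + 1),
      Polynomial.C (p.coeff i * ⟨q, hq⟩ ^ i) * Polynomial.X ^ (n - i), ?_, ?_⟩
  · intro h0
    have hc : p.coeff n ≠ 0 := by
      rw [hn, ← Polynomial.leadingCoeff]
      exact Polynomial.leadingCoeff_ne_zero.mpr hp0
    have hq' : (⟨q, hq⟩ : K) ≠ 0 := fun h => hq0 (by simpa using congrArg Subtype.val h)
    have hco := congrArg (fun r => Polynomial.coeff r 0) h0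
    simp only [Polynomial.finset_sum_coeff, Polynomial.coeff_C_mul, Polynomial.coeff_X_pow,
      Polynomial.coeff_zero] at hco
    rw [Finset.sum_eq_single n] at hco
    · simp only [Nat.sub_self] at hco
      rw [if_pos trivial, mul_one] at hco
      exact (mul_ne_zero hc (pow_ne_zero n hq')) hco
    · intro i hi hne
      rw [Finset.mem_range] at hi
      rw [if_neg (by omega), mul_zero]
    · intro h; exact absurd (Finset.self_mem_range_succ n) h
  · have key : ∀ i ∈ Finset.range (n+1),
        (algebraMap K Fq) (p.coeff i) * q ^ i * u ^ (n - i)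
        = (algebraMap K Fq) (p.coeff i) * w ^ i * u ^ n := by
      intro i hi
      rw [Finset.mem_range] at hi
      have h2 : i + (n - i) = n := by omega
      rw [mul_assoc, mul_assoc]
      congr 1
      rw [← huw, mul_pow, mul_comm (u ^ i), mul_assoc, ← pow_add, h2]
    rw [map_sum]
    simp only [map_mul, Polynomial.aeval_C, map_pow, Polynomial.aeval_X]
    have hqc : (algebraMap K Fq) (⟨q, hq⟩ : K) = q := rfl
    simp only [map_mul, map_pow, hqc]
    calc _ = ∑ i ∈ Finset.range (n+1), ((algebraMap K Fq) (p.coeff i)) * w ^ i * u ^ n :=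
            Finset.sum_congr rfl key
         _ = (Polynomial.aeval w p) * u ^ n := by
            rw [Polynomial.aeval_eq_sum_range, Finset.sum_mul]
            exact Finset.sum_congr rfl fun i hi => by rw [Algebra.smul_def, mul_assoc]
         _ = 0 := by rw [hpw, zero_mul]

lemma stmt4_trans_pow_succ_ne {v : Fq} (hv : Transcendental ℚ v) (e : ℕ) (he : 0 < e) :
    v ^ e + 1 ≠ 0 := by
  intro h
  apply hv
  refine ⟨Polynomial.X ^ e + 1, ?_, ?_⟩
  · intro h0
    have := congrArg (fun r => Polynomial.coeff r e) h0
    simp [Polynomial.coeff_X_pow, Polynomial.coeff_one, he.ne'] at this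
  · simp [h]

set_option maxHeartbeats 1000000 in
set_option synthInstance.maxHeartbeats 400000 in
lemma stmt4_pair_step {u v w : Fq} {e : ℕ} (he : 0 < e)
    (h : AlgebraicIndependent ℚ ![u, v]) (hrel : u * w = v ^ e + 1) :
    AlgebraicIndependent ℚ ![v, w] := by
  have htv : Transcendental ℚ v := by
    have := h.transcendental 1
    simpa using this
  have hv : AlgebraicIndependent ℚ ![v] := algebraicIndependent_iff_transcendental.mpr htv
  have hq0 : v ^ e + 1 ≠ 0 := stmt4_trans_pow_succ_ne htv e he
  have hvK : v ∈ Algebra.adjoin ℚ (Set.range ![v]) :=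
    Algebra.subset_adjoin ⟨0, rfl⟩
  have hqK : v ^ e + 1 ∈ Algebra.adjoin ℚ (Set.range ![v]) :=
    add_mem (pow_mem hvK e) (one_mem _)
  have hvu : AlgebraicIndependent ℚ ![v, u] := stmt4_pair_swap h
  have hopt : AlgebraicIndependent ℚ (fun o : Option (Fin 1) => o.elim u ![v]) := by
    have := hvu.comp (fun o : Option (Fin 1) => o.elim 1 (fun _ => 0))
      (by intro a b hab; cases a <;> cases b <;> simp_all <;>
        exact Subsingleton.elim _ _)
    convert this using 1
    funext o
    rcases o with _ | i
    · rfl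
    · simp [Matrix.cons_val_fin_one]
  have htu : Transcendental (Algebra.adjoin ℚ (Set.range ![v])) u := (hv.option_iff_transcendental u).mp hopt
  have htw : Transcendental (Algebra.adjoin ℚ (Set.range ![v])) w :=
    stmt4_transc_mul hqK hq0 hrel htu
  have hopt2 : AlgebraicIndependent ℚ (fun o : Option (Fin 1) => o.elim w ![v]) :=
    (hv.option_iff_transcendental w).mpr htw
  have := hopt2.comp (fun i : Fin 2 => if i = 0 then (some 0 : Option (Fin 1)) else none)
    (by intro a b hab; fin_cases a <;> fin_cases b <;> simp_all)
  convert this using 1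
  funext i
  fin_cases i <;> rfl

set_option maxHeartbeats 1000000 in
lemma stmt4_genIndep : AlgebraicIndependent ℚ ![gen 0, gen 1] := by
  have h1 := MvPolynomial.algebraicIndependent_X (Fin 2) ℚ
  have h2 := h1.map' (f := IsScalarTower.toAlgHom ℚ (MvPolynomial (Fin 2) ℚ) Fq)
    (IsFractionRing.injective (MvPolynomial (Fin 2) ℚ) Fq)
  convert h2.comp id Function.injective_id using 1
  funext i
  fin_cases i <;> rfl

variable {b c : ℕ} {y : ℤ → Fq}

set_option maxHeartbeats 1000000 in
lemma stmt4_clusterIndep (hb : 0 < b) (hc : 0 < c) (hy : IsClusterSeq b c y) :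
    ∀ m : ℤ, AlgebraicIndependent ℚ ![y m, y (m + 1)] := by
  have base : AlgebraicIndependent ℚ ![y 1, y (1 + 1)] := by
    have : y (1+1) = gen 1 := by norm_num [hy.2.1]
    rw [hy.1, this]; exact stmt4_genIndep
  have fwd : ∀ m : ℤ, AlgebraicIndependent ℚ ![y m, y (m + 1)] →
      AlgebraicIndependent ℚ ![y (m+1), y ((m+1) + 1)] := by
    intro m hm
    have hrel := hy.2.2 (m + 1)
    have h1 : m + 1 - 1 = m := by ring
    have h2 : m + 1 + 1 = m + 2 := by ring
    rw [h1, h2] at hrel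
    rw [h2]
    by_cases hodd : Odd (m + 1)
    · rw [if_pos hodd] at hrel
      exact stmt4_pair_step hb hm hrel
    · rw [if_neg hodd] at hrel
      exact stmt4_pair_step hc hm hrel
  have bwd : ∀ m : ℤ, AlgebraicIndependent ℚ ![y m, y (m + 1)] →
      AlgebraicIndependent ℚ ![y (m-1), y ((m-1) + 1)] := by
    intro m hm
    have hrel := hy.2.2 m
    have h1 : m - 1 + 1 = m := by ring
    rw [h1]
    have hrel' : y (m + 1) * y (m - 1) = (if Odd m then y m ^ b else y m ^ c) + 1 := by
      rw [mul_comm]; exact hrel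
    have hm' := stmt4_pair_swap hm
    by_cases hodd : Odd m
    · rw [if_pos hodd] at hrel'
      exact stmt4_pair_swap (stmt4_pair_step hb hm' hrel')
    · rw [if_neg hodd] at hrel'
      exact stmt4_pair_swap (stmt4_pair_step hc hm' hrel')
  intro m
  have key : ∀ n : ℤ, AlgebraicIndependent ℚ ![y (n + 1), y ((n + 1) + 1)] := by
    intro n
    induction n using Int.induction_on with
    | zero => exact base
    | succ k ih =>
        have := fwd ((k:ℤ) + 1) ih
        convert this using 3 <;> ring
    | pred k ih =>
        have := bwd (-(k:ℤ) + 1) ih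
        convert this using 3 <;> ring
  have := key (m - 1)
  convert this using 3 <;> ring

lemma stmt4_yTrans (hb : 0 < b) (hc : 0 < c) (hy : IsClusterSeq b c y) (m : ℤ) :
    Transcendental ℚ (y m) := by
  have := (stmt4_clusterIndep hb hc hy m).transcendental 0
  simpa using this

lemma stmt4_yNe (hb : 0 < b) (hc : 0 < c) (hy : IsClusterSeq b c y) (m : ℤ) : y m ≠ 0 := by
  intro h
  exact stmt4_yTrans hb hc hy m (h ▸ isAlgebraic_zero)



section Stmt4Aux2
set_option maxHeartbeats 1000000
set_option synthInstance.maxHeartbeats 400000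
variable {b c : ℕ} {y : ℤ → Fq}

/-- the reflection field endomorphism -/
lemma stmt4_exists_phi (hb : 0 < b) (hc : 0 < c) (hy : IsClusterSeq b c y) (p : ℤ) : ∃ φ : Fq →+* Fq, ∀ m : ℤ, φ (y m) = y (2 * p - m) := by
  classical
  have hpair : AlgebraicIndependent ℚ ![y (2*p-1), y (2*p-2)] := by
    have h := stmt4_clusterIndep hb hc hy (2*p-2)
    have : (2*p-2) + 1 = 2*p-1 := by ring
    rw [this] at h
    exact stmt4_pair_swap h
  have hinj : Function.Injective
      ((MvPolynomial.aeval ![y (2*p-1), y (2*p-2)] :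
          MvPolynomial (Fin 2) ℚ →ₐ[ℚ] Fq) : MvPolynomial (Fin 2) ℚ →+* Fq) :=
    algebraicIndependent_iff_injective_aeval.mp hpair
  refine ⟨IsFractionRing.lift (A := MvPolynomial (Fin 2) ℚ) (K := Fq) hinj, ?_⟩
  set φ := IsFractionRing.lift (A := MvPolynomial (Fin 2) ℚ) (K := Fq) hinj with hφ
  have h1 : φ (y 1) = y (2*p - 1) := by
    rw [hy.1]
    show φ (algebraMap _ Fq (X 0)) = _
    rw [IsFractionRing.lift_algebraMap]
    simp
  have h2 : φ (y 2) = y (2*p - 2) := by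
    rw [hy.2.1]
    show φ (algebraMap _ Fq (X 1)) = _
    rw [IsFractionRing.lift_algebraMap]
    simp
  -- parity transfer
  have hpar : ∀ m : ℤ, (if Odd m then y m ^ b else y m ^ c)
      = (if Odd (2*p - m) then y m ^ b else y m ^ c) := by
    intro m
    have : Odd m ↔ Odd (2*p - m) := by rw [Int.odd_iff, Int.odd_iff]; omega
    by_cases h : Odd m
    · rw [if_pos h, if_pos (this.mp h)]
    · rw [if_neg h, if_neg (fun hh => h (this.mpr hh))]
  -- step: knowing φ at m and m+1, compute at m+2 using exchange relations
  have step : ∀ m : ℤ, φ (y m) = y (2*p - m) → φ (y (m+1)) = y (2*p - (m+1)) →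
      φ (y (m+2)) = y (2*p - (m+2)) := by
    intro m hm hm1
    have hrel := hy.2.2 (m+1)
    have e1 : m + 1 - 1 = m := by ring
    have e2 : m + 1 + 1 = m + 2 := by ring
    rw [e1, e2] at hrel
    have hrel2 := hy.2.2 (2*p - (m+1))
    have e3 : 2*p - (m+1) - 1 = 2*p - (m+2) := by ring
    have e4 : 2*p - (m+1) + 1 = 2*p - m := by ring
    rw [e3, e4] at hrel2
    have happ := congrArg φ hrel
    rw [map_mul, hm] at happ
    have hϕif : φ ((if Odd (m+1) then y (m+1) ^ b else y (m+1) ^ c) + 1)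
        = (if Odd (2*p - (m+1)) then y (2*p-(m+1)) ^ b else y (2*p-(m+1)) ^ c) + 1 := by
      rw [map_add, map_one]
      congr 1
      by_cases h : Odd (m+1)
      · have : Odd (2*p - (m+1)) := by
          rw [Int.odd_iff] at *; omega
        rw [if_pos h, if_pos this, map_pow, hm1]
      · have : ¬ Odd (2*p - (m+1)) := by
          rw [Int.odd_iff] at *; omega
        rw [if_neg h, if_neg this, map_pow, hm1]
    rw [hϕif, ← hrel2] at happ
    exact mul_left_cancel₀ (stmt4_yNe hb hc hy (2*p-m))
      (by linear_combination happ : y (2*p-m) * φ (y (m+2)) = y (2*p-m) * y (2*p-(m+2)))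
  -- backward step
  have stepb : ∀ m : ℤ, φ (y (m+1)) = y (2*p - (m+1)) → φ (y (m+2)) = y (2*p - (m+2)) →
      φ (y m) = y (2*p - m) := by
    intro m hm1 hm2
    have hrel := hy.2.2 (m+1)
    have e1 : m + 1 - 1 = m := by ring
    have e2 : m + 1 + 1 = m + 2 := by ring
    rw [e1, e2] at hrel
    have hrel2 := hy.2.2 (2*p - (m+1))
    have e3 : 2*p - (m+1) - 1 = 2*p - (m+2) := by ring
    have e4 : 2*p - (m+1) + 1 = 2*p - m := by ring
    rw [e3, e4] at hrel2
    have happ := congrArg φ hrel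
    rw [map_mul, hm2] at happ
    have hϕif : φ ((if Odd (m+1) then y (m+1) ^ b else y (m+1) ^ c) + 1)
        = (if Odd (2*p - (m+1)) then y (2*p-(m+1)) ^ b else y (2*p-(m+1)) ^ c) + 1 := by
      rw [map_add, map_one]
      congr 1
      by_cases h : Odd (m+1)
      · have : Odd (2*p - (m+1)) := by rw [Int.odd_iff] at *; omega
        rw [if_pos h, if_pos this, map_pow, hm1]
      · have : ¬ Odd (2*p - (m+1)) := by rw [Int.odd_iff] at *; omega
        rw [if_neg h, if_neg this, map_pow, hm1]
    rw [hϕif, ← hrel2] at happ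
    exact mul_left_cancel₀ (stmt4_yNe hb hc hy (2*p-(m+2)))
      (by linear_combination happ : y (2*p-(m+2)) * φ (y m) = y (2*p-(m+2)) * y (2*p-m))
  -- two-step induction
  have key : ∀ n : ℤ, φ (y (n+1)) = y (2*p - (n+1)) ∧ φ (y (n+2)) = y (2*p - (n+2)) := by
    intro n
    induction n using Int.induction_on with
    | zero =>
        refine ⟨?_, ?_⟩
        · rw [show (0:ℤ)+1 = 1 by norm_num]; exact h1
        · rw [show (0:ℤ)+2 = 2 by norm_num]; exact h2
    | succ k ih =>
        have E1 : ((k:ℤ)+1)+1 = (k:ℤ)+2 := by ring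
        refine ⟨?_, ?_⟩
        · rw [E1]; exact ih.2
        · exact step ((k:ℤ)+1) ih.1 (by rw [E1]; exact ih.2)
    | pred k ih =>
        have E1 : -(k:ℤ)-1+1 = -(k:ℤ) := by ring
        have E2 : -(k:ℤ)-1+2 = -(k:ℤ)+1 := by ring
        refine ⟨?_, ?_⟩
        · rw [E1]; exact stepb (-(k:ℤ)) ih.1 ih.2
        · rw [E2]; exact ih.1
  intro m
  have h6 := (key (m-1)).1
  rw [show m-1+1 = m by ring] at h6
  exact h6

lemma stmt4_phi (hb : 0 < b) (hc : 0 < c) (hy : IsClusterSeq b c y) (p : ℤ) :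
    ∃ φ : Fq →+* Fq, (∀ m : ℤ, φ (y m) = y (2 * p - m)) ∧ (∀ x, φ (φ x) = x) := by
  obtain ⟨φ, hyφ⟩ := stmt4_exists_phi hb hc hy p
  refine ⟨φ, hyφ, ?_⟩
  have hcomp : φ.comp φ = RingHom.id Fq := by
    apply IsLocalization.ringHom_ext (nonZeroDivisors (MvPolynomial (Fin 2) ℚ))
    apply MvPolynomial.ringHom_ext
    · intro r
      have hC : (algebraMap (MvPolynomial (Fin 2) ℚ) Fq) (C r) = (r : Fq) :=
        eq_ratCast ((algebraMap (MvPolynomial (Fin 2) ℚ) Fq).comp (C : ℚ →+* _)) r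
      simp only [RingHom.comp_apply, hC, map_ratCast, RingHom.id_apply]
    · intro i
      simp only [RingHom.comp_apply, RingHom.id_apply]
      fin_cases i
      · show φ (φ (gen 0)) = gen 0
        rw [← hy.1, hyφ, hyφ, show 2*p - (2*p - 1) = 1 by ring]
      · show φ (φ (gen 1)) = gen 1
        rw [← hy.2.1, hyφ, hyφ, show 2*p - (2*p - 2) = 2 by ring]
  intro x
  have := congrArg (fun f : Fq →+* Fq => f x) hcomp
  simpa using this

end Stmt4Aux2

set_option maxHeartbeats 1000000 in
set_option synthInstance.maxHeartbeats 400000 in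
/-- for every `p ∈ ℤ` there is a unique ring automorphism `σ_p` of `A(b,c)`
with `σ_p (y m) = y (2p - m)` for all `m`; moreover any such automorphism is an involution
and maps positive elements to positive elements. -/
theorem stmt_4 (b c : ℕ) (hb : 0 < b) (hc : 0 < c)
    (y : ℤ → Fq) (hy : IsClusterSeq b c y) (p : ℤ) :
    (∃! σ : clusterAlg y ≃+* clusterAlg y, ∀ m : ℤ, σ (yMem y m) = yMem y (2 * p - m)) ∧
      ∀ σ : clusterAlg y ≃+* clusterAlg y, (∀ m : ℤ, σ (yMem y m) = yMem y (2 * p - m)) →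
        (∀ x, σ (σ x) = x) ∧
          (∀ x : clusterAlg y, IsPositive y (x : Fq) → IsPositive y (σ x : Fq)) := by
  classical
  obtain ⟨φ, hyφ, hinv⟩ := stmt4_phi hb hc hy p
  -- stability of the cluster algebra under φ
  have hstab : ∀ x ∈ clusterAlg y, φ x ∈ clusterAlg y := by
    intro x hx
    induction hx using Subring.closure_induction with
    | mem z hz =>
        obtain ⟨m, rfl⟩ := hz
        rw [hyφ]
        exact Subring.subset_closure ⟨2*p - m, rfl⟩
    | zero => rw [map_zero]; exact zero_mem _
    | one => rw [map_one]; exact one_mem _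
    | add a b' ha hb' iha ihb => rw [map_add]; exact add_mem iha ihb
    | neg a ha iha => rw [map_neg]; exact neg_mem iha
    | mul a b' ha hb' iha ihb => rw [map_mul]; exact mul_mem iha ihb
  -- the induced automorphism of the cluster algebra
  let σ0 : clusterAlg y ≃+* clusterAlg y :=
    { toFun := fun x => ⟨φ x, hstab x.1 x.2⟩
      invFun := fun x => ⟨φ x, hstab x.1 x.2⟩
      left_inv := fun x => Subtype.ext (hinv x.1)
      right_inv := fun x => Subtype.ext (hinv x.1)
      map_mul' := fun a b => Subtype.ext (map_mul φ a.1 b.1)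
      map_add' := fun a b => Subtype.ext (map_add φ a.1 b.1) }
  have hσ0 : ∀ m : ℤ, σ0 (yMem y m) = yMem y (2 * p - m) := fun m => Subtype.ext (hyφ m)
  -- any automorphism with the defining property agrees with φ
  have hagree : ∀ (σ : clusterAlg y ≃+* clusterAlg y),
      (∀ m : ℤ, σ (yMem y m) = yMem y (2 * p - m)) →
      ∀ (x : Fq) (hx : x ∈ clusterAlg y), ((σ ⟨x, hx⟩ : clusterAlg y) : Fq) = φ x := by
    intro σ hσ x hx
    induction hx using Subring.closure_induction with
    | mem z hz =>
        obtain ⟨m, rfl⟩ := hz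
        rw [hyφ]
        exact congrArg Subtype.val (hσ m)
    | zero =>
        rw [map_zero]
        show ((σ 0 : clusterAlg y) : Fq) = 0
        rw [map_zero]; rfl
    | one =>
        rw [map_one]
        show ((σ 1 : clusterAlg y) : Fq) = 1
        rw [map_one]; rfl
    | add a b' ha hb' iha ihb =>
        rw [map_add, ← iha, ← ihb]
        show ((σ (⟨a, ha⟩ + ⟨b', hb'⟩) : clusterAlg y) : Fq) = _
        rw [map_add]; rfl
    | neg a ha iha =>
        rw [map_neg, ← iha]
        show ((σ (-⟨a, ha⟩) : clusterAlg y) : Fq) = _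
        rw [map_neg]; rfl
    | mul a b' ha hb' iha ihb =>
        rw [map_mul, ← iha, ← ihb]
        show ((σ (⟨a, ha⟩ * ⟨b', hb'⟩) : clusterAlg y) : Fq) = _
        rw [map_mul]; rfl
  refine ⟨⟨σ0, hσ0, ?_⟩, ?_⟩
  · -- uniqueness
    intro σ hσ
    ext x
    exact hagree σ hσ x.1 x.2
  · intro σ hσ
    constructor
    · -- involution
      intro x
      apply Subtype.ext
      have h1 : ((σ x : clusterAlg y) : Fq) = φ x.1 := hagree σ hσ x.1 x.2
      have h2 : ((σ (σ x) : clusterAlg y) : Fq) = φ ((σ x : clusterAlg y) : Fq) :=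
        hagree σ hσ (σ x).1 (σ x).2
      rw [h2, h1, hinv]
    · -- positivity
      rintro x ⟨hx0, hxm⟩
      have hσx : ((σ x : clusterAlg y) : Fq) = φ x.1 := hagree σ hσ x.1 x.2
      rw [hσx]
      constructor
      · intro h
        have hφinj : Function.Injective φ := φ.injective
        exact hx0 (hφinj (by rw [h, map_zero]))
      · intro m
        obtain ⟨f, hf0, hfe⟩ := hxm (2*p - m - 1)
        refine ⟨Finsupp.embDomain (Equiv.prodComm ℤ ℤ).toEmbedding f, ?_, ?_⟩
        · intro δ
          have hδ : δ = (Equiv.prodComm ℤ ℤ) ((Equiv.prodComm ℤ ℤ).symm δ) :=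
            (Equiv.apply_symm_apply _ _).symm
          rw [hδ]
          rw [show ((Equiv.prodComm ℤ ℤ) ((Equiv.prodComm ℤ ℤ).symm δ))
              = (Equiv.prodComm ℤ ℤ).toEmbedding ((Equiv.prodComm ℤ ℤ).symm δ) from rfl,
            Finsupp.embDomain_apply_self]
          exact hf0 _
        · show φ x.1 = _
          rw [hfe, map_sum, Finsupp.support_embDomain, Finset.sum_map]
          refine Finset.sum_congr rfl fun γ hγ => ?_
          rw [map_mul, map_mul, map_zpow₀, map_zpow₀, map_intCast,
            Finsupp.embDomain_apply_self, hyφ, hyφ,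
            show 2*p - (2*p - m - 1) = m + 1 by ring,
            show 2*p - (2*p - m - 1 + 1) = m by ring]
          show _ = (f γ : Fq) * y m ^ ((Equiv.prodComm ℤ ℤ) γ).1 * y (m+1) ^ ((Equiv.prodComm ℤ ℤ) γ).2
          simp only [Equiv.prodComm_apply, Prod.fst_swap, Prod.snd_swap]
          exact mul_right_comm _ _ _
end Stmt4Aux
end
end

section
/- Suppose (b,c) = (2,2) or (b,c) = (1,4), and let δ = (1,1) if (b,c) = (2,2) and δ = (1,2) if (b,c) = (1,4). Then for every n ≥ 1 the element z_n has denominator vector nδ; that is, z_n = N(y₁,y₂)/(y₁^n·y₂^n) for (b,c) = (2,2), respectively z_n = N(y₁,y₂)/(y₁^n·y₂^{2n}) for (b,c) = (1,4), for some polynomial N ∈ ℤ[y₁,y₂] with constant term 1. -/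
open MvPolynomial Finset

noncomputable section

/-!
In both cases the exchange relations give `z · d = s` with `d = y₁y₂`, resp. `d = y₁y₂²`, and
`s ∈ ℤ[y₁, y₂]` of constant term `1`. As `T_n` is monic of degree `n`, `dⁿ T_n(s/d)` is the
homogenization of `T_n` evaluated at `(s, d)`, whose constant term is the leading coefficient
of `T_n`, namely `1`.
-/

namespace Polynomial

variable {R : Type*} [CommSemiring R]

lemma eval_one_zero_homogenize (p : R[X]) (n : ℕ) :
    MvPolynomial.eval ![1, 0] (p.homogenize n) = p.coeff n := by
  induction p using Polynomial.induction_on' with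
  | add p q hp hq => simp [hp, hq]
  | monomial k r =>
    rcases le_or_gt k n with hkn | hnk
    · rw [homogenize_monomial hkn, MvPolynomial.eval_monomial, coeff_monomial]
      rcases hkn.eq_or_lt with rfl | hlt
      · simp
      · simp [Finsupp.prod_fintype, Fin.prod_univ_two, hlt.ne, Nat.sub_ne_zero_of_lt hlt]
    · simp [homogenize_monomial_of_lt hnk, coeff_monomial, hnk.ne']

lemma aeval_homogenize {K : Type*} [Field K] [Algebra R K] {p : R[X]} {n : ℕ}
    (hn : p.natDegree ≤ n) (x : Fin 2 → K) (hx : x 1 ≠ 0) :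
    MvPolynomial.aeval x (p.homogenize n) = aeval (x 0 / x 1) p * x 1 ^ n := by
  rw [MvPolynomial.aeval_def, ← MvPolynomial.eval_map, ← homogenize_map,
    eval_homogenize (natDegree_map_le.trans hn) x hx, eval_map_algebraMap]

end Polynomial

lemma MvPolynomial.constantCoeff_bind₁ {σ τ R : Type*} [CommSemiring R] (g : σ → MvPolynomial τ R)
    (φ : MvPolynomial σ R) :
    constantCoeff (bind₁ g φ) = eval (fun i => constantCoeff (g i)) φ := by
  rw [← eval_zero]
  exact eval₂Hom_bind₁ (RingHom.id R) 0 g φ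

open Polynomial in
theorem exists_aeval_eq_div_pow {R K σ : Type*} [CommSemiring R] [Field K] [Algebra R K]
    {p : R[X]} (hp : p.Monic) {S D : MvPolynomial σ R} (hS : constantCoeff S = 1)
    (hD : constantCoeff D = 0) {v : σ → K} (hv : MvPolynomial.aeval v D ≠ 0) {z : K}
    (hz : z * MvPolynomial.aeval v D = MvPolynomial.aeval v S) :
    ∃ N : MvPolynomial σ R, constantCoeff N = 1 ∧
      aeval z p = MvPolynomial.aeval v N / MvPolynomial.aeval v D ^ p.natDegree := by
  refine ⟨bind₁ ![S, D] (p.homogenize p.natDegree), ?_, ?_⟩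
  · rw [MvPolynomial.constantCoeff_bind₁]
    convert eval_one_zero_homogenize p p.natDegree using 3
    · funext i
      fin_cases i <;> simp [hS, hD]
    · exact hp.symm
  · rw [MvPolynomial.aeval_bind₁, eq_div_iff (pow_ne_zero _ hv),
      aeval_homogenize le_rfl _ (by simpa using hv)]
    simp [eq_div_of_mul_eq hv hz]

theorem cheb_monic_and_natDegree : ∀ n : ℕ, (cheb n).Monic ∧ (cheb n).natDegree = n
  | 0 => by simp [cheb]
  | 1 => by simp [cheb]
  | 2 => by
    rw [cheb]
    exact ⟨by monicity!, by compute_degree!⟩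
  | n + 3 => by
    obtain ⟨hmon, hdeg⟩ := cheb_monic_and_natDegree (n + 2)
    have hdeg' := (cheb_monic_and_natDegree (n + 1)).2
    have hmulX : (Polynomial.X * cheb (n + 2)).natDegree = n + 3 := by
      rw [Polynomial.monic_X.natDegree_mul hmon, hdeg, Polynomial.natDegree_X]
      ring
    have hlt : (cheb (n + 1)).natDegree < (Polynomial.X * cheb (n + 2)).natDegree := by
      omega
    rw [cheb]
    exact ⟨(Polynomial.monic_X.mul hmon).sub_of_left (Polynomial.degree_lt_degree hlt),
      (Polynomial.natDegree_sub_eq_left_of_natDegree_lt hlt).trans hmulX⟩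

lemma gen_ne_zero (i : Fin 2) : gen i ≠ 0 :=
  (map_ne_zero_iff _ (IsFractionRing.injective _ _)).mpr (X_ne_zero i)

namespace IsClusterSeq

variable {b c : ℕ} {y : ℤ → Fq}

lemma exchange_one (hy : IsClusterSeq b c y) : y 0 * y 2 = y 1 ^ b + 1 := by
  simpa using hy.2.2 1

lemma exchange_two (hy : IsClusterSeq b c y) : y 1 * y 3 = y 2 ^ c + 1 := by
  simpa [show ¬ Odd (2 : ℤ) by decide] using hy.2.2 2

lemma zElem_mul_of_two_two (hy : IsClusterSeq 2 2 y) :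
    zElem 2 y * (y 1 * y 2) = y 1 ^ 2 + y 2 ^ 2 + 1 := by
  rw [zElem, if_pos rfl]
  linear_combination (y 1 * y 3) * hy.exchange_one + (y 1 ^ 2 + 1) * hy.exchange_two

lemma zElem_mul_of_one_four (hy : IsClusterSeq 1 4 y) :
    zElem 1 y * (y 1 * y 2 ^ 2) = y 2 ^ 4 + (y 1 + 1) ^ 2 := by
  rw [zElem, if_neg (by norm_num)]
  linear_combination (y 0 * y 2 + y 1 + 1) * (y 1 * y 3) * hy.exchange_one +
    (y 1 + 1) ^ 2 * hy.exchange_two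

theorem hasDenomVector_zn (hy : IsClusterSeq b c y) {δ₁ δ₂ : ℕ} (hδ₁ : δ₁ ≠ 0)
    {S : MvPolynomial (Fin 2) ℤ} (hS : constantCoeff S = 1)
    (hz : zElem b y * (y 1 ^ δ₁ * y 2 ^ δ₂) =
      aeval (fun i : Fin 2 => if i = 0 then y 1 else y 2) S) (n : ℕ) :
    HasDenomVector y ((δ₁ : ℤ) * n, (δ₂ : ℤ) * n) (zn b y n) := by
  set v : Fin 2 → Fq := fun i => if i = 0 then y 1 else y 2
  have hD : aeval v (X 0 ^ δ₁ * X 1 ^ δ₂ : MvPolynomial (Fin 2) ℤ) = y 1 ^ δ₁ * y 2 ^ δ₂ := by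
    simp [v]
  have hd : y 1 ^ δ₁ * y 2 ^ δ₂ ≠ 0 := by
    rw [hy.1, hy.2.1]
    exact mul_ne_zero (pow_ne_zero _ (gen_ne_zero 0)) (pow_ne_zero _ (gen_ne_zero 1))
  obtain ⟨hmon, hdeg⟩ := cheb_monic_and_natDegree n
  obtain ⟨N, hN, hzn⟩ := exists_aeval_eq_div_pow hmon hS (by simp [hδ₁])
    (hD ▸ hd) (hD ▸ hz)
  refine ⟨N, hN, ?_⟩
  rw [zn, hzn, hD, hdeg, mul_pow, ← pow_mul, ← pow_mul]
  norm_cast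

end IsClusterSeq

theorem stmt_9_general (b c : ℕ) (haff : (b = 2 ∧ c = 2) ∨ (b = 1 ∧ c = 4))
    (y : ℤ → Fq) (hy : IsClusterSeq b c y) (n : ℕ) :
    HasDenomVector y (if b = 2 then ((n : ℤ), (n : ℤ)) else ((n : ℤ), 2 * (n : ℤ)))
      (zn b y n) := by
  rcases haff with ⟨rfl, rfl⟩ | ⟨rfl, rfl⟩
  · simpa using hy.hasDenomVector_zn (δ₂ := 1) one_ne_zero (S := X 0 ^ 2 + X 1 ^ 2 + 1)
      (by simp) (by simpa using hy.zElem_mul_of_two_two) n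
  · simpa using hy.hasDenomVector_zn (δ₂ := 2) one_ne_zero (S := X 1 ^ 4 + (X 0 + 1) ^ 2)
      (by simp) (by simpa using hy.zElem_mul_of_one_four) n

/-- in the affine cases, `z_n` has denominator vector `n·δ`, where
`δ = (1,1)` for `(b,c) = (2,2)` and `δ = (1,2)` for `(b,c) = (1,4)`. -/
theorem stmt_9 (b c : ℕ) (haff : (b = 2 ∧ c = 2) ∨ (b = 1 ∧ c = 4))
    (y : ℤ → Fq) (hy : IsClusterSeq b c y) (n : ℕ) (hn : 1 ≤ n) :
    HasDenomVector y (if b = 2 then ((n : ℤ), (n : ℤ)) else ((n : ℤ), 2 * (n : ℤ)))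
      (zn b y n) :=
  stmt_9_general b c haff y hy n
end
end

section
/- Suppose (b,c) = (2,2) or (b,c) = (1,4) and let n ≥ 1. (1) If γ = (g₁,g₂) ∈ ℤ² lies in the relative interior of the line segment from (n,−n) to (−n,n) (case (b,c) = (2,2)), respectively from (n,−2n) to (−n,2n) (case (b,c) = (1,4)), then the Laurent monomial y₁^{g₁}y₂^{g₂} does not occur (has coefficient 0) in the Laurent expansion of z_n in y₁ and y₂. (2) The Laurent expansion of z_n in y₁ and y₂ contains no monomial y₁^{g₁}y₂^{g₂} with g₁ ≥ 0 and g₂ ≥ 0. -/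
open MvPolynomial Finset

noncomputable section

namespace Stmt15Aux

open AddMonoidAlgebra

abbrev L : Type := AddMonoidAlgebra ℤ (ℤ × ℤ)

lemma gen_ne_zero (i : Fin 2) : gen i ≠ 0 := by
  intro h
  have h2 : (X i : MvPolynomial (Fin 2) ℚ) = 0 :=
    IsFractionRing.injective (MvPolynomial (Fin 2) ℚ) Fq (by simpa [gen] using h)
  exact MvPolynomial.X_ne_zero i h2

def phiM : Multiplicative (ℤ × ℤ) →* Fq where
  toFun γ := gen 0 ^ (Multiplicative.toAdd γ).1 * gen 1 ^ (Multiplicative.toAdd γ).2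
  map_one' := by simp
  map_mul' a b := by
    simp only [toAdd_mul, Prod.fst_add, Prod.snd_add,
      zpow_add₀ (gen_ne_zero 0), zpow_add₀ (gen_ne_zero 1)]
    ring

def φ : L →ₐ[ℤ] Fq := AddMonoidAlgebra.lift ℤ Fq (ℤ × ℤ) phiM

lemma phi_single (a : ℤ × ℤ) (c : ℤ) :
    φ (single a c) = (c : Fq) * gen 0 ^ a.1 * gen 1 ^ a.2 := by
  rw [φ, AddMonoidAlgebra.lift_single, Algebra.smul_def]
  simp only [algebraMap_int_eq, eq_intCast, mul_assoc]
  rfl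

lemma phi_apply (f : L) :
    φ f = ∑ γ ∈ f.coeff.support, (f.coeff γ : Fq) * gen 0 ^ γ.1 * gen 1 ^ γ.2 := by
  rw [φ, AddMonoidAlgebra.lift_apply, Finsupp.sum]
  refine Finset.sum_congr rfl fun γ hγ => ?_
  rw [Algebra.smul_def]
  simp only [algebraMap_int_eq, eq_intCast, mul_assoc]
  rfl

end Stmt15Aux
namespace Stmt15Aux

lemma phi_inj : Function.Injective φ := by
  rw [injective_iff_map_eq_zero]
  intro f hf
  by_contra hne
  classical
  obtain ⟨M, hM⟩ : ∃ M : ℕ, ∀ γ ∈ f.coeff.support, -(M:ℤ) ≤ γ.1 ∧ -(M:ℤ) ≤ γ.2 := by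
    refine ⟨f.coeff.support.sup fun γ => (-γ.1).toNat + (-γ.2).toNat, fun γ hγ => ?_⟩
    have h := Finset.le_sup (f := fun γ : ℤ × ℤ => (-γ.1).toNat + (-γ.2).toNat) hγ
    omega
  set e : ℤ × ℤ → (Fin 2 →₀ ℕ) := fun γ =>
    Finsupp.single 0 (γ.1 + M).toNat + Finsupp.single 1 (γ.2 + M).toNat with he
  have hmono : ∀ γ : ℤ × ℤ, (MvPolynomial.monomial (e γ) ((f.coeff γ : ℚ)) : MvPolynomial (Fin 2) ℚ)
      = MvPolynomial.C ((f.coeff γ : ℚ)) * X 0 ^ (γ.1 + M).toNat * X 1 ^ (γ.2 + M).toNat := by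
    intro γ
    rw [MvPolynomial.X_pow_eq_monomial, MvPolynomial.X_pow_eq_monomial, MvPolynomial.C_apply,
      MvPolynomial.monomial_mul, MvPolynomial.monomial_mul, he]
    simp [mul_one, zero_add]
  set P : MvPolynomial (Fin 2) ℚ :=
    ∑ γ ∈ f.coeff.support, MvPolynomial.monomial (e γ) ((f.coeff γ : ℚ)) with hP
  have hAP : algebraMap (MvPolynomial (Fin 2) ℚ) Fq P
      = gen 0 ^ (M : ℤ) * gen 1 ^ (M : ℤ) * φ f := by
    rw [phi_apply, Finset.mul_sum, hP, map_sum]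
    refine Finset.sum_congr rfl fun γ hγ => ?_
    rw [hmono, map_mul, map_mul, map_pow, map_pow]
    have hC : algebraMap (MvPolynomial (Fin 2) ℚ) Fq (MvPolynomial.C ((f.coeff γ : ℚ)))
        = ((f.coeff γ : ℤ) : Fq) := by
      rw [show (MvPolynomial.C ((f.coeff γ : ℚ)) : MvPolynomial (Fin 2) ℚ) = ((f.coeff γ : ℤ) : _) from
        map_intCast (MvPolynomial.C : ℚ →+* MvPolynomial (Fin 2) ℚ) (f.coeff γ), map_intCast]
    rw [hC]
    show _ * gen 0 ^ _ * gen 1 ^ _ = _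
    have h1 : (gen 0 : Fq) ^ ((γ.1 + M).toNat) = gen 0 ^ ((γ.1 : ℤ) + M) := by
      rw [← zpow_natCast, Int.toNat_of_nonneg (by have := (hM γ hγ).1; omega)]
    have h2 : (gen 1 : Fq) ^ ((γ.2 + M).toNat) = gen 1 ^ ((γ.2 : ℤ) + M) := by
      rw [← zpow_natCast, Int.toNat_of_nonneg (by have := (hM γ hγ).2; omega)]
    rw [h1, h2, zpow_add₀ (gen_ne_zero 0), zpow_add₀ (gen_ne_zero 1)]
    ring
  have hP0 : P = 0 := by
    apply IsFractionRing.injective (MvPolynomial (Fin 2) ℚ) Fq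
    rw [hAP, hf, map_zero, mul_zero]
  obtain ⟨γ0, hγ0⟩ := Finsupp.support_nonempty_iff.mpr (fun h => hne (AddMonoidAlgebra.coeff_eq_zero.mp h))
  have hcoeff : MvPolynomial.coeff (e γ0) P = (f.coeff γ0 : ℚ) := by
    rw [hP, MvPolynomial.coeff_sum]
    rw [Finset.sum_eq_single_of_mem γ0 hγ0]
    · rw [MvPolynomial.coeff_monomial, if_pos rfl]
    · intro γ hγ hne'
      rw [MvPolynomial.coeff_monomial, if_neg]
      intro heq
      apply hne'
      have h0 : e γ 0 = e γ0 0 := by rw [heq]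
      have h1 : e γ 1 = e γ0 1 := by rw [heq]
      simp only [he, Finsupp.add_apply, Finsupp.single_apply, if_pos rfl] at h0 h1
      norm_num at h0 h1
      have b1 := (hM γ hγ).1; have b2 := (hM γ hγ).2
      have c1 := (hM γ0 hγ0).1; have c2 := (hM γ0 hγ0).2
      have : γ.1 = γ0.1 := by omega
      have : γ.2 = γ0.2 := by omega
      exact Prod.ext ‹γ.1 = γ0.1› ‹γ.2 = γ0.2›
  rw [hP0, MvPolynomial.coeff_zero] at hcoeff
  have : f.coeff γ0 = 0 := by exact_mod_cast hcoeff.symm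
  exact Finsupp.mem_support_iff.mp hγ0 this

end Stmt15Aux
namespace Stmt15Aux

open AddMonoidAlgebra

/-- `single` with coefficient 1. -/
def sgl (a : ℤ × ℤ) : L := AddMonoidAlgebra.single a 1

/-- `n • u` written with coordinates. -/
def nmul (n : ℕ) (u : ℤ × ℤ) : ℤ × ℤ := ((n : ℤ) * u.1, (n : ℤ) * u.2)

lemma supp_mul_lt {d : ℤ × ℤ → ℤ} (hd : ∀ α β, d (α + β) = d α + d β)
    {f g : L} (hf : ∀ γ ∈ f.coeff.support, d γ ≤ 0) (hg : ∀ γ ∈ g.coeff.support, d γ < 0) :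
    ∀ γ ∈ (f * g).coeff.support, d γ < 0 := by
  classical
  intro γ hγ
  have h := AddMonoidAlgebra.support_coeff_mul_subset f g hγ
  rw [Finset.mem_add] at h
  obtain ⟨α, hα, β, hβ, rfl⟩ := h
  have := hf α hα
  have := hg β hβ
  rw [hd]
  omega

lemma supp_add_lt {d : ℤ × ℤ → ℤ} {f g : L}
    (hf : ∀ γ ∈ f.coeff.support, d γ < 0) (hg : ∀ γ ∈ g.coeff.support, d γ < 0) :
    ∀ γ ∈ (f + g).coeff.support, d γ < 0 := by
  intro γ hγ
  rw [AddMonoidAlgebra.coeff_add] at hγ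
  rcases Finset.mem_union.mp (Finsupp.support_add hγ) with h | h
  · exact hf γ h
  · exact hg γ h

lemma sgl_mul (a b : ℤ × ℤ) : sgl a * sgl b = sgl (a + b) := by
  rw [sgl, sgl, sgl, AddMonoidAlgebra.single_mul_single, mul_one]

lemma sgl_supp_le {d : ℤ × ℤ → ℤ} {a : ℤ × ℤ} (h : d a ≤ 0) :
    ∀ γ ∈ (sgl a).coeff.support, d γ ≤ 0 := by
  intro γ hγ
  simp only [sgl, AddMonoidAlgebra.coeff_single] at hγ
  have := Finsupp.support_single_subset hγ
  rw [Finset.mem_singleton] at this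
  rwa [this]

lemma supp_mul_lt' {d : ℤ × ℤ → ℤ} (hd : ∀ α β, d (α + β) = d α + d β)
    {f g : L} (hf : ∀ γ ∈ f.coeff.support, d γ < 0) (hg : ∀ γ ∈ g.coeff.support, d γ ≤ 0) :
    ∀ γ ∈ (f * g).coeff.support, d γ < 0 := by
  intro γ hγ
  rw [mul_comm] at hγ
  exact supp_mul_lt hd hg hf γ hγ

lemma key (d : ℤ × ℤ → ℤ) (hd : ∀ α β, d (α + β) = d α + d β)
    (u : ℤ × ℤ) (hu : d u = 0) (W : L) (hW : ∀ γ ∈ W.coeff.support, d γ < 0) :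
    ∀ n : ℕ, 1 ≤ n → ∃ E : L, (∀ γ ∈ E.coeff.support, d γ < 0) ∧
      Polynomial.aeval (sgl u + sgl (-u) + W) (cheb n)
        = sgl (nmul n u) + sgl (-(nmul n u)) + E := by
  have hd0 : d 0 = 0 := by have h00 := hd 0 0; rw [add_zero] at h00; omega
  have hdneg : ∀ a : ℤ × ℤ, d (-a) = -(d a) := by
    intro a; have := hd a (-a); simp [hd0] at this; omega
  set Z : L := sgl u + sgl (-u) + W with hZ
  have hAle : ∀ γ ∈ (sgl u + sgl (-u)).coeff.support, d γ ≤ 0 := by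
    intro γ hγ
    rw [AddMonoidAlgebra.coeff_add] at hγ
    rcases Finset.mem_union.mp (Finsupp.support_add hγ) with h' | h'
    · exact sgl_supp_le (le_of_eq hu) γ h'
    · exact sgl_supp_le (le_of_eq (by rw [hdneg, hu, neg_zero])) γ h'
  have hZle : ∀ γ ∈ Z.coeff.support, d γ ≤ 0 := by
    intro γ hγ
    rw [AddMonoidAlgebra.coeff_add] at hγ
    rcases Finset.mem_union.mp (Finsupp.support_add hγ) with h | h
    · exact hAle γ h
    · exact (hW γ h).le
  -- arithmetic on indices
  have hidx : ∀ m : ℕ, u + nmul (m + 1) u = nmul (m + 2) u := by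
    intro m
    simp only [nmul, Prod.ext_iff, Prod.fst_add, Prod.snd_add]
    constructor <;> push_cast <;> ring
  have hidx' : ∀ m : ℕ, u + -(nmul (m + 2) u) = -(nmul (m + 1) u) := by
    intro m
    simp only [nmul, Prod.ext_iff, Prod.fst_add, Prod.snd_add, Prod.fst_neg, Prod.snd_neg]
    constructor <;> push_cast <;> ring
  have hdnu : ∀ m : ℕ, d (nmul m u) = 0 := by
    intro m
    induction m with
    | zero =>
      have : nmul 0 u = 0 := by simp [nmul, Prod.ext_iff]
      rw [this, hd0]
    | succ j ih =>
      have hstep : nmul (j + 1) u = nmul j u + u := by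
        simp only [nmul, Prod.ext_iff, Prod.fst_add, Prod.snd_add]
        constructor <;> push_cast <;> ring
      rw [hstep, hd, ih, hu]
      norm_num
  -- main two-step induction
  suffices h : ∀ n : ℕ, (∃ E : L, (∀ γ ∈ E.coeff.support, d γ < 0) ∧
      Polynomial.aeval Z (cheb (n + 1))
        = sgl (nmul (n + 1) u) + sgl (-(nmul (n + 1) u)) + E) ∧
      (∃ E : L, (∀ γ ∈ E.coeff.support, d γ < 0) ∧
      Polynomial.aeval Z (cheb (n + 2))
        = sgl (nmul (n + 2) u) + sgl (-(nmul (n + 2) u)) + E) by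
    intro n hn
    obtain ⟨k, rfl⟩ := Nat.exists_eq_add_of_le hn
    rw [add_comm 1 k]
    exact (h k).1
  intro n
  induction n with
  | zero =>
    have hone : nmul 1 u = u := by simp [nmul]
    constructor
    · refine ⟨W, hW, ?_⟩
      rw [show cheb 1 = Polynomial.X from rfl, Polynomial.aeval_X, hone, hZ]
    · -- n = 2 : Z ^ 2 - 2
      refine ⟨W * W + (sgl u + sgl (-u)) * W + (sgl u + sgl (-u)) * W, ?_, ?_⟩
      · apply supp_add_lt (supp_add_lt
          (supp_mul_lt hd (fun γ h => (hW γ h).le) hW)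
          (supp_mul_lt hd hAle hW))
          (supp_mul_lt hd hAle hW)
      · have hA : sgl u * sgl u = sgl (nmul 2 u) := by
          rw [sgl_mul]
          congr 1
          simp only [nmul, Prod.ext_iff, Prod.fst_add, Prod.snd_add]
          constructor <;> push_cast <;> ring
        have hB : sgl (-u) * sgl (-u) = sgl (-(nmul 2 u)) := by
          rw [sgl_mul]
          congr 1
          simp only [nmul, Prod.ext_iff, Prod.fst_add, Prod.snd_add, Prod.fst_neg, Prod.snd_neg]
          constructor <;> push_cast <;> ring
        have hC : sgl u * sgl (-u) = 1 := by
          rw [sgl_mul, add_neg_cancel, sgl, AddMonoidAlgebra.one_def]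
        rw [show cheb 2 = Polynomial.X ^ 2 - 2 from rfl]
        rw [map_sub, map_pow, Polynomial.aeval_X, hZ]
        have h2 : (Polynomial.aeval (sgl u + sgl (-u) + W)) (2 : Polynomial ℤ) = 2 :=
          map_ofNat _ 2
        rw [h2]
        linear_combination hA + hB + 2 * hC
  | succ k ih =>
    refine ⟨ih.2, ?_⟩
    obtain ⟨E1, hE1, h1⟩ := ih.1
    obtain ⟨E2, hE2, h2⟩ := ih.2
    have f1 : sgl u * sgl (nmul (k + 2) u) = sgl (nmul (k + 3) u) := by
      rw [sgl_mul, hidx (k + 1)]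
    have f2 : sgl (-u) * sgl (-(nmul (k + 2) u)) = sgl (-(nmul (k + 3) u)) := by
      rw [sgl_mul, ← neg_add, hidx (k + 1)]
    have f3 : sgl u * sgl (-(nmul (k + 2) u)) = sgl (-(nmul (k + 1) u)) := by
      rw [sgl_mul, hidx' k]
    have f4 : sgl (-u) * sgl (nmul (k + 2) u) = sgl (nmul (k + 1) u) := by
      rw [sgl_mul]
      congr 1
      have := hidx' k
      have h' : -u + nmul (k + 2) u = -(u + -(nmul (k + 2) u)) := by
        rw [neg_add, neg_neg]
      rw [h', this, neg_neg]
    refine ⟨Z * E2 + W * (sgl (nmul (k + 2) u) + sgl (-(nmul (k + 2) u))) - E1, ?_, ?_⟩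
    · intro γ hγ
      rw [AddMonoidAlgebra.coeff_sub] at hγ
      have hs := Finsupp.support_sub (f := (Z * E2 +
          W * (sgl (nmul (k + 2) u) + sgl (-(nmul (k + 2) u)))).coeff) (g := E1.coeff)
      rcases Finset.mem_union.mp (hs hγ) with h | h
      · refine supp_add_lt (supp_mul_lt hd hZle hE2)
          (supp_mul_lt' hd hW ?_) γ h
        intro γ' hγ'
        rw [AddMonoidAlgebra.coeff_add] at hγ'
        rcases Finset.mem_union.mp (Finsupp.support_add hγ') with h' | h'
        · exact sgl_supp_le (hdnu (k + 2)).le γ' h'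
        · exact sgl_supp_le (by rw [hdneg, hdnu (k + 2), neg_zero]) γ' h'
      · exact hE1 γ h
    · rw [show cheb (k + 3) = Polynomial.X * cheb (k + 2) - cheb (k + 1) from rfl]
      rw [map_sub, map_mul, Polynomial.aeval_X, h1, h2, hZ]
      linear_combination f1 + f2 + f3 + f4

end Stmt15Aux
namespace Stmt15Aux

open AddMonoidAlgebra

lemma y_rels {b c : ℕ} {y : ℤ → Fq} (hy : IsClusterSeq b c y) :
    y 1 = gen 0 ∧ y 2 = gen 1 ∧ y 0 * y 2 = y 1 ^ b + 1 ∧ y 1 * y 3 = y 2 ^ c + 1 := by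
  obtain ⟨h1, h2, hrel⟩ := hy
  refine ⟨h1, h2, ?_, ?_⟩
  · have h := hrel 1
    norm_num at h
    exact h
  · have h := hrel 2
    norm_num [Int.not_odd_iff_even] at h
    exact h

lemma z22 {y : ℤ → Fq} (hy : IsClusterSeq 2 2 y) :
    zElem 2 y = φ (sgl (1, -1) + sgl (-(1, -1)) + sgl (-1, -1)) := by
  obtain ⟨h1, h2, h0, h3⟩ := y_rels hy
  have hy1 : y 1 ≠ 0 := by rw [h1]; exact gen_ne_zero 0
  have hy2 : y 2 ≠ 0 := by rw [h2]; exact gen_ne_zero 1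
  have hφ : φ (sgl (1, -1) + sgl (-(1, -1)) + sgl (-1, -1))
      = y 1 * (y 2)⁻¹ + (y 1)⁻¹ * y 2 + (y 1)⁻¹ * (y 2)⁻¹ := by
    rw [map_add, map_add, sgl, sgl, sgl, phi_single, phi_single, phi_single, ← h1, ← h2]
    norm_num
  apply mul_right_cancel₀ (mul_ne_zero hy1 hy2)
  have hr : (y 1 * (y 2)⁻¹ + (y 1)⁻¹ * y 2 + (y 1)⁻¹ * (y 2)⁻¹) * (y 1 * y 2)
      = y 1 ^ 2 + y 2 ^ 2 + 1 := by
    field_simp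
  rw [hφ, hr, zElem, if_pos rfl]
  linear_combination (y 1 * y 3) * h0 + (y 1 ^ 2 + 1) * h3

lemma z14 {y : ℤ → Fq} (hy : IsClusterSeq 1 4 y) :
    zElem 1 y = φ (sgl (-1, 2) + sgl (-(-1, 2)) +
      (AddMonoidAlgebra.single ((0 : ℤ), (-2 : ℤ)) (2 : ℤ) + sgl (-1, -2))) := by
  obtain ⟨h1, h2, h0, h3⟩ := y_rels hy
  have hy1 : y 1 ≠ 0 := by rw [h1]; exact gen_ne_zero 0
  have hy2 : y 2 ≠ 0 := by rw [h2]; exact gen_ne_zero 1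
  have hφ : φ (sgl (-1, 2) + sgl (-(-1, 2)) +
        (AddMonoidAlgebra.single ((0 : ℤ), (-2 : ℤ)) (2 : ℤ) + sgl (-1, -2)))
      = (y 1)⁻¹ * y 2 ^ 2 + y 1 * (y 2 ^ 2)⁻¹ + 2 * (y 2 ^ 2)⁻¹
        + (y 1)⁻¹ * (y 2 ^ 2)⁻¹ := by
    rw [map_add, map_add, map_add, sgl, sgl, sgl,
      phi_single, phi_single, phi_single, phi_single, ← h1, ← h2]
    have e1 : ∀ x : Fq, x ^ (2 : ℤ) = x ^ (2 : ℕ) := fun x => by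
      rw [show (2 : ℤ) = ((2 : ℕ) : ℤ) by norm_num, zpow_natCast]
    have e2 : ∀ x : Fq, x ^ (-2 : ℤ) = (x ^ (2 : ℕ))⁻¹ := fun x => by
      rw [show (-2 : ℤ) = -((2 : ℕ) : ℤ) by norm_num, zpow_neg, zpow_natCast]
    norm_num [e1, e2]
    ring
  apply mul_right_cancel₀ (mul_ne_zero hy1 (pow_ne_zero 2 hy2))
  have hr : ((y 1)⁻¹ * y 2 ^ 2 + y 1 * (y 2 ^ 2)⁻¹ + 2 * (y 2 ^ 2)⁻¹
        + (y 1)⁻¹ * (y 2 ^ 2)⁻¹) * (y 1 * y 2 ^ 2)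
      = y 2 ^ 4 + y 1 ^ 2 + 2 * y 1 + 1 := by
    have e1 : (y 1)⁻¹ * y 1 = 1 := inv_mul_cancel₀ hy1
    have e2 : (y 2 ^ 2)⁻¹ * y 2 ^ 2 = 1 := inv_mul_cancel₀ (pow_ne_zero 2 hy2)
    linear_combination (y 2 ^ 4 + (y 2 ^ 2)⁻¹ * y 2 ^ 2) * e1 + (y 1 ^ 2 + 2 * y 1 + 1) * e2
  rw [hφ, hr, zElem, if_neg (by norm_num)]
  norm_num at h0
  linear_combination ((y 0 * y 2 + y 1 + 1) * (y 1 * y 3)) * h0 + ((y 1 + 1) ^ 2) * h3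

end Stmt15Aux
namespace Stmt15Aux

lemma L_apply_add (f g : L) (γ : ℤ × ℤ) : (f + g).coeff γ = f.coeff γ + g.coeff γ := rfl

lemma L_single_apply (a γ : ℤ × ℤ) (c : ℤ) :
    (AddMonoidAlgebra.single a c : L).coeff γ = if a = γ then c else 0 := by
  classical
  exact Finsupp.single_apply

lemma expansion_eq {y : ℤ → Fq} (h1 : y 1 = gen 0) (h2 : y 2 = gen 1) {b : ℕ} {Zl : L}
    (hz : zElem b y = φ Zl) (n : ℕ) {f : ℤ × ℤ →₀ ℤ}
    (hf : IsLaurentExp y 1 f (zn b y n)) : f = (Polynomial.aeval Zl (cheb n)).coeff := by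
  rw [← AddMonoidAlgebra.coeff_ofCoeff f]
  congr 1
  apply phi_inj
  have hzn : zn b y n = φ (Polynomial.aeval Zl (cheb n)) := by
    rw [zn, hz, Polynomial.aeval_algHom_apply]
  replace hf : zn b y n
      = ∑ γ ∈ f.support, (f γ : Fq) * y 1 ^ γ.1 * y (1 + 1) ^ γ.2 := hf
  rw [← hzn, phi_apply, hf, AddMonoidAlgebra.coeff_ofCoeff]
  refine Finset.sum_congr rfl fun γ _ => ?_
  rw [show (1 : ℤ) + 1 = 2 by norm_num, h1, h2]

end Stmt15Aux


/-- in the affine cases, for `n ≥ 1`: (1) no lattice point in the relative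
interior of the segment from `(n,-n)` to `(-n,n)` (case `(2,2)`), resp. from `(n,-2n)` to
`(-n,2n)` (case `(1,4)`), carries a nonzero coefficient in the Laurent expansion of `z_n`
in `y₁, y₂`; (2) this expansion contains no monomial `y₁^{g₁} y₂^{g₂}` with
`g₁, g₂ ≥ 0`. -/
theorem stmt_15 (b c : ℕ) (haff : (b = 2 ∧ c = 2) ∨ (b = 1 ∧ c = 4))
    (y : ℤ → Fq) (hy : IsClusterSeq b c y) (n : ℕ) (hn : 1 ≤ n) :
    (∀ γ : ℤ × ℤ,
        toR γ ∈ openSegment ℝ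
          (if b = 2 then ((n : ℝ), (-n : ℝ)) else ((n : ℝ), (-2 * n : ℝ)))
          (if b = 2 then ((-n : ℝ), (n : ℝ)) else ((-n : ℝ), (2 * n : ℝ))) →
        ∀ f : ℤ × ℤ →₀ ℤ, IsLaurentExp y 1 f (zn b y n) → f γ = 0) ∧
      ∀ f : ℤ × ℤ →₀ ℤ, IsLaurentExp y 1 f (zn b y n) →
        ∀ γ ∈ f.support, ¬(0 ≤ γ.1 ∧ 0 ≤ γ.2) := by
  classical
  have hn' : (1 : ℝ) ≤ (n : ℝ) := by exact_mod_cast hn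
  obtain ⟨rfl, rfl⟩ | ⟨rfl, rfl⟩ := haff
  · -- case (2,2)
    obtain ⟨h1, h2, h0, h3⟩ := Stmt15Aux.y_rels hy
    have hz := Stmt15Aux.z22 hy
    set d : ℤ × ℤ → ℤ := fun γ => γ.1 + γ.2 with hdd
    have hd : ∀ α β : ℤ × ℤ, d (α + β) = d α + d β := by
      intro α β
      simp only [hdd, Prod.fst_add, Prod.snd_add]
      ring
    have hW : ∀ γ ∈ (Stmt15Aux.sgl ((-1 : ℤ), (-1 : ℤ))).coeff.support, d γ < 0 := by
      intro γ hγ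
      simp only [Stmt15Aux.sgl, AddMonoidAlgebra.coeff_single] at hγ
      have hmem := Finsupp.support_single_subset hγ
      rw [Finset.mem_singleton] at hmem
      rw [hmem]
      norm_num [hdd]
    obtain ⟨E, hE, hform⟩ :=
      Stmt15Aux.key d hd ((1 : ℤ), (-1 : ℤ)) (by norm_num [hdd])
        (Stmt15Aux.sgl ((-1 : ℤ), (-1 : ℤ))) hW n hn
    set p := Stmt15Aux.nmul n ((1 : ℤ), (-1 : ℤ)) with hpdef
    have hp1 : p.1 = (n : ℤ) := by simp [hpdef, Stmt15Aux.nmul]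
    have hp2 : p.2 = -(n : ℤ) := by simp [hpdef, Stmt15Aux.nmul]
    have hval : ∀ f : ℤ × ℤ →₀ ℤ, IsLaurentExp y 1 f (zn 2 y n) → ∀ γ : ℤ × ℤ,
        f γ = (if p = γ then 1 else 0) + (if -p = γ then 1 else 0) + E.coeff γ := by
      intro f hf γ
      rw [Stmt15Aux.expansion_eq h1 h2 hz n hf, hform]
      simp [Stmt15Aux.sgl, Stmt15Aux.L_apply_add, Stmt15Aux.L_single_apply, Finsupp.single_apply]
    have hE0 : ∀ γ : ℤ × ℤ, 0 ≤ d γ → E.coeff γ = 0 := by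
      intro γ hγ
      by_contra h
      exact absurd (hE γ (Finsupp.mem_support_iff.mpr h)) (by omega)
    constructor
    · intro γ hseg f hf
      rw [if_pos rfl, if_pos rfl] at hseg
      obtain ⟨a, b', ha, hb', hab, hsum⟩ := hseg
      have e1 : a * (n : ℝ) + b' * (-(n : ℝ)) = (γ.1 : ℝ) := by
        have := congrArg Prod.fst hsum
        simpa [toR, Prod.fst_add, Prod.smul_fst, smul_eq_mul] using this
      have e2 : a * (-(n : ℝ)) + b' * (n : ℝ) = (γ.2 : ℝ) := by
        have := congrArg Prod.snd hsum
        simpa [toR, Prod.snd_add, Prod.smul_snd, smul_eq_mul] using this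
      have hγ2 : γ.2 = -γ.1 := by
        have : (γ.2 : ℝ) = -(γ.1 : ℝ) := by linarith
        exact_mod_cast this
      have hlt : γ.1 < (n : ℤ) := by
        have : (γ.1 : ℝ) < (n : ℝ) := by nlinarith
        exact_mod_cast this
      have hgt : -(n : ℤ) < γ.1 := by
        have : -(n : ℝ) < (γ.1 : ℝ) := by nlinarith
        exact_mod_cast this
      rw [hval f hf γ, hE0 γ (by simp [hdd]; omega),
        if_neg (fun h => by rw [← h, hp1] at hlt; omega),
        if_neg (fun h => by
          have : γ.1 = -(n : ℤ) := by rw [← h]; simp [hp1]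
          omega)]
      norm_num
    · intro f hf γ hγs hc
      have hfγ := Finsupp.mem_support_iff.mp hγs
      rw [hval f hf γ, hE0 γ (by simp [hdd]; omega)] at hfγ
      by_cases c1 : p = γ
      · have : γ.2 = -(n : ℤ) := by rw [← c1]; exact hp2
        omega
      · by_cases c2 : -p = γ
        · have : γ.1 = -(n : ℤ) := by rw [← c2]; simp [hp1]
          omega
        · rw [if_neg c1, if_neg c2] at hfγ
          norm_num at hfγ
  · -- case (1,4)
    obtain ⟨h1, h2, h0, h3⟩ := Stmt15Aux.y_rels hy
    have hz := Stmt15Aux.z14 hy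
    set d : ℤ × ℤ → ℤ := fun γ => 2 * γ.1 + γ.2 with hdd
    have hd : ∀ α β : ℤ × ℤ, d (α + β) = d α + d β := by
      intro α β
      simp only [hdd, Prod.fst_add, Prod.snd_add]
      ring
    have hW : ∀ γ ∈ (AddMonoidAlgebra.single ((0 : ℤ), (-2 : ℤ)) (2 : ℤ)
        + Stmt15Aux.sgl ((-1 : ℤ), (-2 : ℤ))).coeff.support, d γ < 0 := by
      intro γ hγ
      rw [AddMonoidAlgebra.coeff_add] at hγ
      simp only [Stmt15Aux.sgl, AddMonoidAlgebra.coeff_single] at hγ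
      rcases Finset.mem_union.mp (Finsupp.support_add hγ) with h | h
      all_goals {
        have hmem := Finsupp.support_single_subset h
        rw [Finset.mem_singleton] at hmem
        rw [hmem]
        norm_num [hdd] }
    obtain ⟨E, hE, hform⟩ :=
      Stmt15Aux.key d hd ((-1 : ℤ), (2 : ℤ)) (by norm_num [hdd])
        (AddMonoidAlgebra.single ((0 : ℤ), (-2 : ℤ)) (2 : ℤ)
          + Stmt15Aux.sgl ((-1 : ℤ), (-2 : ℤ))) hW n hn
    set p := Stmt15Aux.nmul n ((-1 : ℤ), (2 : ℤ)) with hpdef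
    have hp1 : p.1 = -(n : ℤ) := by simp [hpdef, Stmt15Aux.nmul]
    have hp2 : p.2 = 2 * (n : ℤ) := by simp [hpdef, Stmt15Aux.nmul]; ring
    have hval : ∀ f : ℤ × ℤ →₀ ℤ, IsLaurentExp y 1 f (zn 1 y n) → ∀ γ : ℤ × ℤ,
        f γ = (if p = γ then 1 else 0) + (if -p = γ then 1 else 0) + E.coeff γ := by
      intro f hf γ
      rw [Stmt15Aux.expansion_eq h1 h2 hz n hf, hform]
      simp [Stmt15Aux.sgl, Stmt15Aux.L_apply_add, Stmt15Aux.L_single_apply, Finsupp.single_apply]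
    have hE0 : ∀ γ : ℤ × ℤ, 0 ≤ d γ → E.coeff γ = 0 := by
      intro γ hγ
      by_contra h
      exact absurd (hE γ (Finsupp.mem_support_iff.mpr h)) (by omega)
    constructor
    · intro γ hseg f hf
      rw [if_neg (by norm_num), if_neg (by norm_num)] at hseg
      obtain ⟨a, b', ha, hb', hab, hsum⟩ := hseg
      have e1 : a * (n : ℝ) + b' * (-(n : ℝ)) = (γ.1 : ℝ) := by
        have := congrArg Prod.fst hsum
        simpa [toR, Prod.fst_add, Prod.smul_fst, smul_eq_mul] using this
      have e2 : a * (-2 * (n : ℝ)) + b' * (2 * (n : ℝ)) = (γ.2 : ℝ) := by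
        have := congrArg Prod.snd hsum
        simpa [toR, Prod.snd_add, Prod.smul_snd, smul_eq_mul] using this
      have hγ2 : γ.2 = -2 * γ.1 := by
        have : (γ.2 : ℝ) = -2 * (γ.1 : ℝ) := by linarith
        exact_mod_cast this
      have hlt : γ.1 < (n : ℤ) := by
        have : (γ.1 : ℝ) < (n : ℝ) := by nlinarith
        exact_mod_cast this
      have hgt : -(n : ℤ) < γ.1 := by
        have : -(n : ℝ) < (γ.1 : ℝ) := by nlinarith
        exact_mod_cast this
      rw [hval f hf γ, hE0 γ (by simp [hdd]; omega),
        if_neg (fun h => by rw [← h, hp1] at hgt; omega),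
        if_neg (fun h => by
          have : γ.1 = (n : ℤ) := by rw [← h]; simp [hp1]
          omega)]
      norm_num
    · intro f hf γ hγs hc
      have hfγ := Finsupp.mem_support_iff.mp hγs
      rw [hval f hf γ, hE0 γ (by simp [hdd]; omega)] at hfγ
      by_cases c1 : p = γ
      · have : γ.1 = -(n : ℤ) := by rw [← c1]; exact hp1
        omega
      · by_cases c2 : -p = γ
        · have : γ.2 = -(2 * (n : ℤ)) := by rw [← c2]; simp [hp2]
          omega
        · rw [if_neg c1, if_neg c2] at hfγ
          norm_num at hfγ
end
end

section
/- Suppose (b,c) = (2,2) or (b,c) = (1,4). Then σ_p(z_n) = z_n for every p ∈ ℤ and every n ≥ 1. -/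
open MvPolynomial Finset

noncomputable section

/-! ### Auxiliary machinery -/

abbrev R2 : Type := MvPolynomial (Fin 2) ℚ

/-- A polynomial has nonnegative coefficients. -/
def NNp (P : R2) : Prop := ∀ d, 0 ≤ P.coeff d

lemma NNp.mul {P Q : R2} (hP : NNp P) (hQ : NNp Q) : NNp (P * Q) := by
  intro d
  rw [MvPolynomial.coeff_mul]
  exact Finset.sum_nonneg fun x _ => mul_nonneg (hP _) (hQ _)

lemma NNp.add {P Q : R2} (hP : NNp P) (hQ : NNp Q) : NNp (P + Q) := fun d => by
  rw [MvPolynomial.coeff_add]; exact add_nonneg (hP d) (hQ d)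

lemma NNp.one : NNp 1 := fun d => by
  rw [MvPolynomial.coeff_one]; split <;> norm_num

lemma NNp.Xi (i : Fin 2) : NNp (MvPolynomial.X i) := fun d => by
  rw [MvPolynomial.coeff_X']; split <;> norm_num

lemma NNp.pow {P : R2} (hP : NNp P) (n : ℕ) : NNp (P ^ n) := by
  induction n with
  | zero => simpa using NNp.one
  | succ k ih => rw [pow_succ]; exact ih.mul hP

lemma NNp.add_ne_zero {P Q : R2} (hP : NNp P) (hQ : NNp Q) (hP0 : P ≠ 0) : P + Q ≠ 0 := by
  obtain ⟨d, hd⟩ := MvPolynomial.ne_zero_iff.1 hP0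
  intro h
  have h2 : (P + Q).coeff d = 0 := by rw [h]; simp
  rw [MvPolynomial.coeff_add] at h2
  have h3 : 0 < P.coeff d := lt_of_le_of_ne (hP d) (Ne.symm hd)
  have := hQ d
  linarith

/-- `x` is a ratio of two nonzero polynomials with nonnegative coefficients. -/
def PosFrac (x : Fq) : Prop :=
  ∃ P Q : R2, NNp P ∧ NNp Q ∧ P ≠ 0 ∧ Q ≠ 0 ∧
    x * algebraMap R2 Fq Q = algebraMap R2 Fq P

lemma algNe {P : R2} (h : P ≠ 0) : algebraMap R2 Fq P ≠ 0 := fun h0 =>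
  h (IsFractionRing.injective R2 Fq (by rw [h0, map_zero]))

lemma PosFrac.ne_zero {x : Fq} (h : PosFrac x) : x ≠ 0 := by
  obtain ⟨P, Q, _, _, hP0, hQ0, he⟩ := h
  intro hx
  rw [hx, zero_mul] at he
  exact algNe hP0 he.symm

lemma PosFrac.one : PosFrac 1 := ⟨1, 1, NNp.one, NNp.one, one_ne_zero, one_ne_zero, by simp⟩

lemma PosFrac.gen (i : Fin 2) : PosFrac (gen i) :=
  ⟨MvPolynomial.X i, 1, NNp.Xi i, NNp.one, MvPolynomial.X_ne_zero i, one_ne_zero, by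
    simp [_root_.gen]⟩

lemma PosFrac.mul {a b : Fq} (ha : PosFrac a) (hb : PosFrac b) : PosFrac (a * b) := by
  obtain ⟨P1, Q1, h1, h2, h3, h4, h5⟩ := ha
  obtain ⟨P2, Q2, g1, g2, g3, g4, g5⟩ := hb
  exact ⟨P1 * P2, Q1 * Q2, h1.mul g1, h2.mul g2, mul_ne_zero h3 g3, mul_ne_zero h4 g4, by
    rw [map_mul, map_mul, ← h5, ← g5]; ring⟩

lemma PosFrac.add {a b : Fq} (ha : PosFrac a) (hb : PosFrac b) : PosFrac (a + b) := by
  obtain ⟨P1, Q1, h1, h2, h3, h4, h5⟩ := ha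
  obtain ⟨P2, Q2, g1, g2, g3, g4, g5⟩ := hb
  exact ⟨P1 * Q2 + P2 * Q1, Q1 * Q2, (h1.mul g2).add (g1.mul h2), h2.mul g2,
    NNp.add_ne_zero (h1.mul g2) (g1.mul h2) (mul_ne_zero h3 g4), mul_ne_zero h4 g4, by
    rw [map_add, map_mul, map_mul, map_mul, ← h5, ← g5]; ring⟩

lemma PosFrac.pow {a : Fq} (ha : PosFrac a) (n : ℕ) : PosFrac (a ^ n) := by
  induction n with
  | zero => simpa using PosFrac.one
  | succ k ih => rw [pow_succ]; exact ih.mul ha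

lemma PosFrac.of_mul {a c w : Fq} (ha : PosFrac a) (hw : PosFrac w) (he : a * c = w) :
    PosFrac c := by
  obtain ⟨Pa, Qa, h1, h2, h3, h4, h5⟩ := ha
  obtain ⟨Pw, Qw, g1, g2, g3, g4, g5⟩ := hw
  exact ⟨Pw * Qa, Qw * Pa, g1.mul h2, g2.mul h1, mul_ne_zero g3 h4, mul_ne_zero g4 h3, by
    rw [map_mul, map_mul, ← h5, ← g5, ← he]; ring⟩

lemma pos_all {b c : ℕ} {y : ℤ → Fq} (hy : IsClusterSeq b c y) :
    ∀ m : ℤ, PosFrac (y m) := by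
  obtain ⟨h1, h2, hrel⟩ := hy
  have hrhs : ∀ m : ℤ, PosFrac (y m) →
      PosFrac ((if Odd m then y m ^ b else y m ^ c) + 1) := by
    intro m hm
    split <;> exact (hm.pow _).add PosFrac.one
  have up : ∀ m : ℤ, PosFrac (y m) → PosFrac (y (m + 1)) → PosFrac (y (m + 2)) := by
    intro m hm hm1
    have h := hrel (m + 1)
    rw [show m + 1 - 1 = m by ring, show m + 1 + 1 = m + 2 by ring] at h
    exact hm.of_mul (hrhs (m + 1) hm1) h
  have down : ∀ m : ℤ, PosFrac (y m) → PosFrac (y (m + 1)) → PosFrac (y (m - 1)) := by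
    intro m hm hm1
    have h := hrel m
    rw [mul_comm] at h
    exact hm1.of_mul (hrhs m hm) h
  have key : ∀ k : ℤ, PosFrac (y (k + 1)) ∧ PosFrac (y (k + 2)) := by
    intro k
    induction k using Int.induction_on with
    | zero =>
      constructor
      · rw [show (0 : ℤ) + 1 = 1 by ring, h1]; exact PosFrac.gen 0
      · rw [show (0 : ℤ) + 2 = 2 by ring, h2]; exact PosFrac.gen 1
    | succ i ih =>
      have hnew := up ((i : ℤ) + 1) ih.1
        (by rw [show (i : ℤ) + 1 + 1 = (i : ℤ) + 2 by ring]; exact ih.2)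
      constructor
      · rw [show (i : ℤ) + 1 + 1 = (i : ℤ) + 2 by ring]; exact ih.2
      · exact hnew
    | pred i ih =>
      have h2' : PosFrac (y (-(i : ℤ) + 2)) := ih.2
      have h1' : PosFrac (y (-(i : ℤ) + 1)) := ih.1
      have hnew := down (-(i : ℤ) + 1) h1'
        (by rw [show -(i : ℤ) + 1 + 1 = -(i : ℤ) + 2 by ring]; exact h2')
      constructor
      · rw [show -(i : ℤ) - 1 + 1 = -(i : ℤ) + 1 - 1 by ring]; exact hnew
      · rw [show -(i : ℤ) - 1 + 2 = -(i : ℤ) + 1 by ring]; exact h1'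
  intro m
  have := (key (m - 1)).1
  rwa [show m - 1 + 1 = m by ring] at this

/-! ### Translation invariance of `z` -/

lemma zeta_const_22 {y : ℤ → Fq} (hrel : ∀ k : ℤ, y (k - 1) * y (k + 1) = y k ^ 2 + 1)
    (yne : ∀ k : ℤ, y k ≠ 0) (m : ℤ) :
    y m * y (m + 3) - y (m + 1) * y (m + 2) = y 0 * y 3 - y 1 * y 2 := by
  have step : ∀ k : ℤ, y (k + 1) * y (k + 4) - y (k + 2) * y (k + 3)
      = y k * y (k + 3) - y (k + 1) * y (k + 2) := by
    intro k
    have hA := hrel (k + 1); rw [show k + 1 - 1 = k by ring, show k + 1 + 1 = k + 2 by ring] at hA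
    have hB := hrel (k + 2); rw [show k + 2 - 1 = k + 1 by ring, show k + 2 + 1 = k + 3 by ring] at hB
    have hC := hrel (k + 3); rw [show k + 3 - 1 = k + 2 by ring, show k + 3 + 1 = k + 4 by ring] at hC
    have key : (y (k + 1) * y (k + 4) - y (k + 2) * y (k + 3)) * y (k + 2)
        = (y k * y (k + 3) - y (k + 1) * y (k + 2)) * y (k + 2) := by
      linear_combination y (k + 1) * hC - y (k + 3) * hA - (y (k + 1) - y (k + 3)) * hB
    exact mul_right_cancel₀ (yne (k + 2)) key
  induction m using Int.induction_on with
  | zero => norm_num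
  | succ i ih =>
    rw [show (i : ℤ) + 1 + 3 = (i : ℤ) + 4 by ring, show (i : ℤ) + 1 + 1 = (i : ℤ) + 2 by ring,
      show (i : ℤ) + 1 + 2 = (i : ℤ) + 3 by ring, step (i : ℤ)]
    exact ih
  | pred i ih =>
    have h := step (-(i : ℤ) - 1)
    rw [show -(i : ℤ) - 1 + 1 = -(i : ℤ) by ring, show -(i : ℤ) - 1 + 4 = -(i : ℤ) + 3 by ring,
      show -(i : ℤ) - 1 + 2 = -(i : ℤ) + 1 by ring,
      show -(i : ℤ) - 1 + 3 = -(i : ℤ) + 2 by ring] at h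
    rw [show -(i : ℤ) - 1 + 3 = -(i : ℤ) + 2 by ring, show -(i : ℤ) - 1 + 1 = -(i : ℤ) by ring,
      show -(i : ℤ) - 1 + 2 = -(i : ℤ) + 1 by ring, ← h]
    exact ih

lemma v_const_14 {y : ℤ → Fq}
    (ro : ∀ k : ℤ, y (2 * k) * y (2 * k + 2) = y (2 * k + 1) + 1)
    (re : ∀ k : ℤ, y (2 * k + 1) * y (2 * k + 3) = y (2 * k + 2) ^ 4 + 1)
    (yne : ∀ k : ℤ, y k ≠ 0) :
    (∀ k : ℤ, y (2 * k) ^ 2 * y (2 * k + 3) - (y (2 * k + 1) + 2) * y (2 * k + 2) ^ 2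
        = y 0 ^ 2 * y 3 - (y 1 + 2) * y 2 ^ 2) ∧
    (∀ k : ℤ, y (2 * k + 1) * y (2 * k + 4) ^ 2 - (y (2 * k + 3) + 2) * y (2 * k + 2) ^ 2
        = y 0 ^ 2 * y 3 - (y 1 + 2) * y 2 ^ 2) := by
  have ro' : ∀ k : ℤ, y (2 * k + 2) * y (2 * k + 4) = y (2 * k + 3) + 1 := by
    intro k
    have h := ro (k + 1)
    rwa [show 2 * (k + 1) + 2 = 2 * k + 4 by ring,
      show 2 * (k + 1) + 1 = 2 * k + 3 by ring, show 2 * (k + 1) = 2 * k + 2 by ring] at h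
  have re' : ∀ k : ℤ, y (2 * k + 3) * y (2 * k + 5) = y (2 * k + 4) ^ 4 + 1 := by
    intro k
    have h := re (k + 1)
    rwa [show 2 * (k + 1) + 1 = 2 * k + 3 by ring, show 2 * (k + 1) + 3 = 2 * k + 5 by ring,
      show 2 * (k + 1) + 2 = 2 * k + 4 by ring] at h
  have L1 : ∀ k : ℤ, y (2 * k) ^ 2 * y (2 * k + 3) - (y (2 * k + 1) + 2) * y (2 * k + 2) ^ 2
      = y (2 * k + 1) * y (2 * k + 4) ^ 2 - (y (2 * k + 3) + 2) * y (2 * k + 2) ^ 2 := by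
    intro k
    have hA := ro k
    have hB := re k
    have hC := ro' k
    have key : (y (2 * k) ^ 2 * y (2 * k + 3) - (y (2 * k + 1) + 2) * y (2 * k + 2) ^ 2)
          * y (2 * k + 2) ^ 2
        = (y (2 * k + 1) * y (2 * k + 4) ^ 2 - (y (2 * k + 3) + 2) * y (2 * k + 2) ^ 2)
          * y (2 * k + 2) ^ 2 := by
      linear_combination (y (2 * k + 3) * (y (2 * k) * y (2 * k + 2) + y (2 * k + 1) + 1)) * hA
        - (y (2 * k + 1) * (y (2 * k + 2) * y (2 * k + 4) + y (2 * k + 3) + 1)) * hC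
        - (y (2 * k + 3) - y (2 * k + 1)) * hB
    exact mul_right_cancel₀ (pow_ne_zero 2 (yne (2 * k + 2))) key
  have L2 : ∀ k : ℤ, y (2 * k + 1) * y (2 * k + 4) ^ 2 - (y (2 * k + 3) + 2) * y (2 * k + 2) ^ 2
      = y (2 * k + 2) ^ 2 * y (2 * k + 5) - (y (2 * k + 3) + 2) * y (2 * k + 4) ^ 2 := by
    intro k
    have hB := re k
    have hC := ro' k
    have hD := re' k
    have key : (y (2 * k + 1) * y (2 * k + 4) ^ 2 - (y (2 * k + 3) + 2) * y (2 * k + 2) ^ 2)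
          * y (2 * k + 3)
        = (y (2 * k + 2) ^ 2 * y (2 * k + 5) - (y (2 * k + 3) + 2) * y (2 * k + 4) ^ 2)
          * y (2 * k + 3) := by
      linear_combination y (2 * k + 4) ^ 2 * hB - y (2 * k + 2) ^ 2 * hD
        - (y (2 * k + 4) ^ 2 - y (2 * k + 2) ^ 2)
          * (y (2 * k + 3) + 1 + y (2 * k + 2) * y (2 * k + 4)) * hC
    exact mul_right_cancel₀ (yne (2 * k + 3)) key
  have V0 : ∀ k : ℤ, y (2 * k) ^ 2 * y (2 * k + 3) - (y (2 * k + 1) + 2) * y (2 * k + 2) ^ 2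
      = y 0 ^ 2 * y 3 - (y 1 + 2) * y 2 ^ 2 := by
    intro k
    induction k using Int.induction_on with
    | zero => norm_num
    | succ i ih =>
      rw [show 2 * ((i : ℤ) + 1) = 2 * (i : ℤ) + 2 by ring,
        show 2 * (i : ℤ) + 2 + 3 = 2 * (i : ℤ) + 5 by ring,
        show 2 * (i : ℤ) + 2 + 1 = 2 * (i : ℤ) + 3 by ring,
        show 2 * (i : ℤ) + 2 + 2 = 2 * (i : ℤ) + 4 by ring, ← L2 (i : ℤ), ← L1 (i : ℤ)]
      exact ih
    | pred i ih =>
      have h := L2 (-(i : ℤ) - 1)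
      rw [show 2 * (-(i : ℤ) - 1) + 2 = 2 * (-(i : ℤ)) by ring,
        show 2 * (-(i : ℤ) - 1) + 5 = 2 * (-(i : ℤ)) + 3 by ring,
        show 2 * (-(i : ℤ) - 1) + 3 = 2 * (-(i : ℤ)) + 1 by ring,
        show 2 * (-(i : ℤ) - 1) + 4 = 2 * (-(i : ℤ)) + 2 by ring] at h
      rw [L1 (-(i : ℤ) - 1)]
      rw [show 2 * (-(i : ℤ) - 1) + 3 = 2 * (-(i : ℤ)) + 1 by ring,
        show 2 * (-(i : ℤ) - 1) + 4 = 2 * (-(i : ℤ)) + 2 by ring,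
        show 2 * (-(i : ℤ) - 1) + 2 = 2 * (-(i : ℤ)) by ring, h]
      exact ih
  refine ⟨V0, fun k => ?_⟩
  rw [L2 k]
  have h := V0 (k + 1)
  rwa [show 2 * (k + 1) = 2 * k + 2 by ring, show 2 * k + 2 + 3 = 2 * k + 5 by ring,
    show 2 * k + 2 + 1 = 2 * k + 3 by ring, show 2 * k + 2 + 2 = 2 * k + 4 by ring] at h

/-! ### Gluing via `aeval` -/

lemma coe_aeval_sub {y : ℤ → Fq} (x : clusterAlg y) (q : Polynomial ℤ) :
    ((Polynomial.aeval x q : clusterAlg y) : Fq) = Polynomial.aeval (x : Fq) q := by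
  show (clusterAlg y).subtype (Polynomial.aeval x q) = Polynomial.aeval (x : Fq) q
  rw [Polynomial.aeval_def, Polynomial.aeval_def, Polynomial.hom_eval₂]
  congr 1
  exact Subsingleton.elim _ _

lemma sigma_aeval {y : ℤ → Fq} (σ : clusterAlg y ≃+* clusterAlg y)
    (x : clusterAlg y) (q : Polynomial ℤ) :
    σ (Polynomial.aeval x q) = Polynomial.aeval (σ x) q := by
  show σ.toRingHom (Polynomial.aeval x q) = Polynomial.aeval (σ.toRingHom x) q
  rw [Polynomial.aeval_def, Polynomial.aeval_def, Polynomial.hom_eval₂]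
  congr 1
  exact Subsingleton.elim _ _

lemma glue {y : ℤ → Fq} (b : ℕ) (σ : clusterAlg y ≃+* clusterAlg y) (Z : clusterAlg y)
    (hZ : (Z : Fq) = zElem b y) (hfix : σ Z = Z) (n : ℕ) (hz : zn b y n ∈ clusterAlg y) :
    (σ ⟨zn b y n, hz⟩ : Fq) = zn b y n := by
  have h1 : (⟨zn b y n, hz⟩ : clusterAlg y) = Polynomial.aeval Z (cheb n) := by
    apply Subtype.ext
    show zn b y n = _
    rw [coe_aeval_sub, hZ, zn]
  rw [h1, sigma_aeval, hfix, coe_aeval_sub, hZ, zn]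

/-- in the affine cases, `σ_p (z_n) = z_n` for every `p ∈ ℤ` and `n ≥ 1`. -/
theorem stmt_16 (b c : ℕ) (haff : (b = 2 ∧ c = 2) ∨ (b = 1 ∧ c = 4))
    (y : ℤ → Fq) (hy : IsClusterSeq b c y) (p : ℤ)
    (σ : clusterAlg y ≃+* clusterAlg y)
    (hσ : ∀ m : ℤ, σ (yMem y m) = yMem y (2 * p - m))
    (n : ℕ) (hn : 1 ≤ n) (hz : zn b y n ∈ clusterAlg y) :
    (σ ⟨zn b y n, hz⟩ : Fq) = zn b y n := by
  have yne : ∀ k : ℤ, y k ≠ 0 := fun k => (pos_all hy k).ne_zero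
  obtain ⟨hy1, hy2, hrel⟩ := hy
  rcases haff with ⟨rfl, rfl⟩ | ⟨rfl, rfl⟩
  · -- case (b, c) = (2, 2)
    have rel2 : ∀ k : ℤ, y (k - 1) * y (k + 1) = y k ^ 2 + 1 := by
      intro k
      have h := hrel k
      split_ifs at h <;> exact h
    refine glue 2 σ (yMem y 0 * yMem y 3 - yMem y 1 * yMem y 2) ?_ ?_ n hz
    · rw [zElem, if_pos rfl]; rfl
    · have hσ' : ∀ m : ℤ, σ.toRingHom (yMem y m) = yMem y (2 * p - m) := fun m => hσ m
      apply Subtype.ext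
      show ((σ.toRingHom (yMem y 0 * yMem y 3 - yMem y 1 * yMem y 2) : clusterAlg y) : Fq) = _
      set_option synthInstance.maxHeartbeats 1000000 in
        rw [map_sub, map_mul, map_mul, hσ' 0, hσ' 3, hσ' 1, hσ' 2,
          show 2 * p - 0 = 2 * p by ring]
      show y (2 * p) * y (2 * p - 3) - y (2 * p - 1) * y (2 * p - 2)
          = y 0 * y 3 - y 1 * y 2
      have h := zeta_const_22 rel2 yne (2 * p - 3)
      rw [show 2 * p - 3 + 3 = 2 * p by ring, show 2 * p - 3 + 1 = 2 * p - 2 by ring,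
        show 2 * p - 3 + 2 = 2 * p - 1 by ring] at h
      linear_combination h
  · -- case (b, c) = (1, 4)
    have ro : ∀ k : ℤ, y (2 * k) * y (2 * k + 2) = y (2 * k + 1) + 1 := by
      intro k
      have h := hrel (2 * k + 1)
      rw [if_pos ⟨k, by ring⟩] at h
      rwa [show 2 * k + 1 - 1 = 2 * k by ring, show 2 * k + 1 + 1 = 2 * k + 2 by ring,
        pow_one] at h
    have re : ∀ k : ℤ, y (2 * k + 1) * y (2 * k + 3) = y (2 * k + 2) ^ 4 + 1 := by
      intro k
      have h := hrel (2 * k + 2)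
      rw [if_neg (Int.not_odd_iff_even.mpr ⟨k + 1, by ring⟩)] at h
      rwa [show 2 * k + 2 - 1 = 2 * k + 1 by ring, show 2 * k + 2 + 1 = 2 * k + 3 by ring] at h
    obtain ⟨V0, W0⟩ := v_const_14 ro re yne
    refine glue 1 σ (yMem y 0 ^ 2 * yMem y 3 - (yMem y 1 + 2) * yMem y 2 ^ 2) ?_ ?_ n hz
    · rw [zElem, if_neg (by norm_num)]; rfl
    · have hσ' : ∀ m : ℤ, σ.toRingHom (yMem y m) = yMem y (2 * p - m) := fun m => hσ m
      have h2 : σ.toRingHom (2 : clusterAlg y) = 2 := by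
        set_option synthInstance.maxHeartbeats 1000000 in
          rw [show (2 : clusterAlg y) = 1 + 1 by norm_num, map_add, map_one]
      apply Subtype.ext
      show ((σ.toRingHom (yMem y 0 ^ 2 * yMem y 3 - (yMem y 1 + 2) * yMem y 2 ^ 2) :
          clusterAlg y) : Fq) = _
      set_option synthInstance.maxHeartbeats 1000000 in
        rw [map_sub, map_mul, map_mul, map_pow, map_pow, map_add, h2, hσ' 0, hσ' 3, hσ' 1,
          hσ' 2, show 2 * p - 0 = 2 * p by ring]
      show y (2 * p) ^ 2 * y (2 * p - 3) - (y (2 * p - 1) + 2) * y (2 * p - 2) ^ 2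
          = y 0 ^ 2 * y 3 - (y 1 + 2) * y 2 ^ 2
      have h := W0 (p - 2)
      rw [show 2 * (p - 2) + 1 = 2 * p - 3 by ring, show 2 * (p - 2) + 4 = 2 * p by ring,
        show 2 * (p - 2) + 3 = 2 * p - 1 by ring, show 2 * (p - 2) + 2 = 2 * p - 2 by ring] at h
      linear_combination h
end
end

section
/- Suppose (b,c) = (2,2), with the conventions z₀ = 1 and z_j = 0 for j < 0. Then for all m ∈ ℤ and n ≥ 1: (i) z_n·y_m = y_{m−n} + y_{m+n}; (ii) y_m·y_{m+n} = y_{⌊m+n/2⌋}·y_{⌈m+n/2⌉} + Σ_{k≥1} k·z_{n−2k} (a finite sum, since z_{n−2k} = 0 for 2k > n). -/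
open MvPolynomial Finset

noncomputable section

section Aux

lemma aux_no_sqrt_neg_one (f : Fq) : f ^ 2 ≠ -1 := by
  intro hf
  obtain ⟨p, q, hq, rfl⟩ := IsFractionRing.div_surjective (A := MvPolynomial (Fin 2) ℚ) f
  have hq0 : q ≠ 0 := nonZeroDivisors.ne_zero hq
  have hqF : algebraMap (MvPolynomial (Fin 2) ℚ) Fq q ≠ 0 := by
    simpa using (IsFractionRing.to_map_ne_zero_of_mem_nonZeroDivisors (K := Fq) hq)
  have h2 : algebraMap (MvPolynomial (Fin 2) ℚ) Fq (p ^ 2 + q ^ 2) = 0 := by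
    rw [div_pow, div_eq_iff (pow_ne_zero _ hqF)] at hf
    push_cast [map_add, map_pow]
    rw [hf]; ring
  have h3 : p ^ 2 + q ^ 2 = 0 := by
    have := IsFractionRing.injective (MvPolynomial (Fin 2) ℚ) Fq
    exact this (by simpa using h2)
  apply hq0
  apply MvPolynomial.funext
  intro x
  have := congrArg (eval x) h3
  simp only [map_add, map_pow, map_zero] at this
  have h4 : eval x q = 0 := by nlinarith [sq_nonneg (eval x p), sq_nonneg (eval x q)]
  simpa using h4

variable {y : ℤ → Fq}

lemma aux_y_ne_zero (hrel : ∀ m : ℤ, y (m - 1) * y (m + 1) = y m ^ 2 + 1) (m : ℤ) :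
    y m ≠ 0 := by
  intro h0
  have h := hrel (m + 1)
  rw [show m + 1 - 1 = m by ring] at h
  rw [h0, zero_mul] at h
  exact aux_no_sqrt_neg_one (y (m + 1)) (by linear_combination -h)

lemma aux_zElem_two : zElem 2 y = y 0 * y 3 - y 1 * y 2 := by simp [zElem]

lemma aux_zn_zero : zn 2 y 0 = 1 := by simp [zn, cheb]
lemma aux_zn_one : zn 2 y 1 = zElem 2 y := by simp [zn, cheb]
lemma aux_zn_two : zn 2 y 2 = zElem 2 y ^ 2 - 2 := by simp [zn, cheb, map_ofNat]
lemma aux_zn_rec (n : ℕ) :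
    zn 2 y (n + 3) = zElem 2 y * zn 2 y (n + 2) - zn 2 y (n + 1) := by
  simp [zn, cheb]

lemma aux_hz (hrel : ∀ m : ℤ, y (m - 1) * y (m + 1) = y m ^ 2 + 1) (m : ℤ) :
    zElem 2 y * y m = y (m - 1) + y (m + 1) := by
  rw [aux_zElem_two]
  set z := y 0 * y 3 - y 1 * y 2 with hzdef
  have up : ∀ k : ℤ, z * y k = y (k - 1) + y (k + 1) → z * y (k + 1) = y k + y (k + 2) := by
    intro k hk
    apply mul_right_cancel₀ (aux_y_ne_zero hrel k)
    have h1 := hrel k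
    have h2 := hrel (k + 1)
    rw [show k + 1 - 1 = k by ring, show k + 1 + 1 = k + 2 by ring] at h2
    linear_combination y (k + 1) * hk + h1 - h2
  have down : ∀ k : ℤ, z * y (k + 1) = y k + y (k + 2) → z * y k = y (k - 1) + y (k + 1) := by
    intro k hk
    apply mul_right_cancel₀ (aux_y_ne_zero hrel (k + 1))
    have h1 := hrel k
    have h2 := hrel (k + 1)
    rw [show k + 1 - 1 = k by ring, show k + 1 + 1 = k + 2 by ring] at h2
    linear_combination y k * hk - h1 + h2
  have base : z * y 1 = y 0 + y 2 := by
    have h1 := hrel 1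
    have h2 := hrel 2
    norm_num at h1 h2
    linear_combination y 0 * h2 + y 2 * h1
  induction m using Int.induction_on with
  | zero =>
      have := down 0 (by norm_num [base])
      norm_num at this ⊢
      convert this using 3 <;> norm_num
  | succ i ih =>
      rw [show (i : ℤ) + 1 - 1 = (i : ℤ) by ring, show (i : ℤ) + 1 + 1 = (i : ℤ) + 2 by ring]
      exact up i ih
  | pred i ih =>
      exact down (-(i : ℤ) - 1)
        (by rw [show -(i : ℤ) - 1 + 1 = -(i : ℤ) by ring,
              show -(i : ℤ) - 1 + 2 = -(i : ℤ) + 1 by ring]; exact ih)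

lemma aux_zn_mul_y (hrel : ∀ m : ℤ, y (m - 1) * y (m + 1) = y m ^ 2 + 1) :
    ∀ (n : ℕ) (m : ℤ), zn 2 y (n + 1) * y m = y (m - (n + 1)) + y (m + (n + 1)) := by
  intro n
  induction n using Nat.strong_induction_on with
  | _ n ih =>
    match n with
    | 0 =>
      intro m
      rw [aux_zn_one, show m - ((0 : ℕ) + 1 : ℤ) = m - 1 by norm_num,
        show m + ((0 : ℕ) + 1 : ℤ) = m + 1 by norm_num]
      exact aux_hz hrel m
    | 1 =>
      intro m
      rw [aux_zn_two, show m - ((1 : ℕ) + 1 : ℤ) = m - 2 by norm_num,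
        show m + ((1 : ℕ) + 1 : ℤ) = m + 2 by norm_num]
      have h0 := aux_hz hrel m
      have h1 := aux_hz hrel (m - 1)
      have h2 := aux_hz hrel (m + 1)
      rw [show m - 1 - 1 = m - 2 by ring, show m - 1 + 1 = m by ring] at h1
      rw [show m + 1 - 1 = m by ring, show m + 1 + 1 = m + 2 by ring] at h2
      linear_combination zElem 2 y * h0 + h1 + h2 - 2 * (by ring : y m + y m = 2 * y m)
    | (k + 2) =>
      intro m
      push_cast
      rw [aux_zn_rec, show m - ((k : ℤ) + 2 + 1) = m - k - 3 by push_cast; ring,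
        show m + ((k : ℤ) + 2 + 1) = m + k + 3 by push_cast; ring]
      have A := ih (k + 1) (by omega) m
      have B := ih k (by omega) m
      push_cast at A B
      rw [show m - ((k : ℤ) + 1 + 1) = m - k - 2 by push_cast; ring,
        show m + ((k : ℤ) + 1 + 1) = m + k + 2 by push_cast; ring] at A
      rw [show m - ((k : ℤ) + 1) = m - k - 1 by push_cast; ring,
        show m + ((k : ℤ) + 1) = m + k + 1 by push_cast; ring] at B
      have h3 := aux_hz hrel (m - k - 2)
      have h4 := aux_hz hrel (m + k + 2)
      rw [show m - (k : ℤ) - 2 - 1 = m - k - 3 by ring,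
        show m - (k : ℤ) - 2 + 1 = m - k - 1 by ring] at h3
      rw [show m + (k : ℤ) + 2 - 1 = m + k + 1 by ring,
        show m + (k : ℤ) + 2 + 1 = m + k + 3 by ring] at h4
      linear_combination zElem 2 y * A - B + h3 + h4

lemma aux_znI_natCast (k : ℕ) : znI 2 y (k : ℤ) = zn 2 y k := by simp [znI]

lemma aux_znI_neg {j : ℤ} (h : j < 0) : znI 2 y j = 0 := by simp [znI, h]

end Aux

/-- Auxiliary sum `D n = Σ_{j ≥ 0} z_{n-2j}`. -/
def Dd (y : ℤ → Fq) (n : ℕ) : Fq := ∑ j ∈ Finset.range (n + 1), znI 2 y ((n : ℤ) - 2 * j)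

/-- Auxiliary sum `C n = Σ_{k ≥ 1} k z_{n-2k}`. -/
def Cc (y : ℤ → Fq) (n : ℕ) : Fq := ∑ k ∈ Finset.Icc 1 n, (k : Fq) * znI 2 y ((n : ℤ) - 2 * k)

section Aux2

variable {y : ℤ → Fq}

lemma aux_Icc_to_range (f : ℕ → Fq) (n : ℕ) :
    ∑ k ∈ Finset.Icc 1 n, f k = ∑ i ∈ Finset.range n, f (1 + i) := by
  rw [← Finset.Ico_add_one_right_eq_Icc, Finset.sum_Ico_eq_sum_range]
  simp

lemma aux_Dstep (n : ℕ) : Dd y (n + 2) = zn 2 y (n + 2) + Dd y n := by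
  rw [Dd, Finset.sum_range_succ', Finset.sum_range_succ]
  push_cast
  rw [show ((n : ℤ) + 2 - 2 * ((n : ℤ) + 1 + 1)) = -(n : ℤ) - 2 by ring, aux_znI_neg (by omega),
    show ((n : ℤ) + 2 - 0) = ((n + 2 : ℕ) : ℤ) by push_cast; ring, aux_znI_natCast]
  rw [show (∑ x ∈ Finset.range (n + 1), znI 2 y ((n : ℤ) + 2 - 2 * ((x : ℤ) + 1))) = Dd y n from
    Finset.sum_congr rfl fun x _ => by
      rw [show ((n : ℤ) + 2 - 2 * ((x : ℤ) + 1)) = (n : ℤ) - 2 * x by ring]]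
  ring

lemma aux_D0 : Dd y 0 = zn 2 y 0 := by norm_num [Dd, znI]
lemma aux_D1 : Dd y 1 = zn 2 y 1 := by norm_num [Dd, Finset.sum_range_succ, znI]

lemma aux_Cstep (n : ℕ) : Cc y (n + 2) = Cc y n + Dd y n := by
  rw [Cc, aux_Icc_to_range (fun k => (k : Fq) * znI 2 y (((n + 2 : ℕ) : ℤ) - 2 * k)) (n + 2)]
  have e1 : ∀ i : ℕ, ((1 + i : ℕ) : Fq) * znI 2 y (((n + 2 : ℕ) : ℤ) - 2 * (1 + i : ℕ))
      = (i : Fq) * znI 2 y ((n : ℤ) - 2 * i) + znI 2 y ((n : ℤ) - 2 * i) := by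
    intro i
    rw [show (((n + 2 : ℕ) : ℤ) - 2 * ((1 + i : ℕ) : ℤ)) = (n : ℤ) - 2 * i by push_cast; ring]
    push_cast
    ring
  rw [Finset.sum_congr rfl fun i _ => e1 i, Finset.sum_add_distrib]
  congr 1
  · rw [Finset.sum_range_succ', Finset.sum_range_succ]
    push_cast
    rw [show ((n : ℤ) - 2 * ((n : ℤ) + 1)) = -(n : ℤ) - 2 by ring, aux_znI_neg (by omega)]
    rw [Cc, aux_Icc_to_range (fun k => (k : Fq) * znI 2 y ((n : ℤ) - 2 * k)) n]
    rw [Finset.sum_congr rfl (fun (x : ℕ) _ => show ((x : Fq) + 1) * znI 2 y ((n : ℤ) - 2 * ((x : ℤ) + 1))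
      = ((1 + x : ℕ) : Fq) * znI 2 y ((n : ℤ) - 2 * ((1 + x : ℕ) : ℤ)) by push_cast; ring_nf)]
    ring
  · rw [Finset.sum_range_succ,
      show ((n : ℤ) - 2 * ((n : ℕ) + 1 : ℕ)) = -(n : ℤ) - 2 by push_cast; ring,
      aux_znI_neg (by omega), add_zero]
    rfl

lemma aux_I2 : ∀ n : ℕ, 2 * Dd y (n + 1) = zn 2 y (n + 1) + zElem 2 y * Dd y n := by
  intro n
  induction n using Nat.strong_induction_on with
  | _ n ih =>
    match n with
    | 0 => rw [aux_D1, aux_D0, aux_zn_zero, aux_zn_one]; ring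
    | 1 =>
      rw [show (1 + 1 : ℕ) = 0 + 2 from rfl, aux_Dstep 0, aux_D0, aux_D1,
        aux_zn_zero, aux_zn_one, aux_zn_two]
      ring
    | (k + 2) =>
      have h1 := aux_Dstep (y := y) (k + 1)
      have h2 := aux_Dstep (y := y) k
      have h3 := ih k (by omega)
      have h4 := aux_zn_rec (y := y) k
      linear_combination 2 * h1 + h3 - zElem 2 y * h2 + h4

lemma aux_Drec (n : ℕ) : Dd y (n + 2) = zElem 2 y * Dd y (n + 1) - Dd y n := by
  have h1 := aux_I2 (y := y) (n + 1)
  have h2 := aux_Dstep (y := y) n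
  linear_combination h1 - h2

lemma aux_Q (hrel : ∀ m : ℤ, y (m - 1) * y (m + 1) = y m ^ 2 + 1) :
    ∀ (n : ℕ) (m : ℤ), y m * y (m + n + 2) = y (m + 1) * y (m + n + 1) + Dd y n := by
  intro n
  induction n using Nat.strong_induction_on with
  | _ n ih =>
    match n with
    | 0 =>
      intro m
      rw [show m + ((0 : ℕ) : ℤ) + 2 = m + 2 by norm_num,
        show m + ((0 : ℕ) : ℤ) + 1 = m + 1 by norm_num, aux_D0, aux_zn_zero]
      have h1 := hrel (m + 1)
      rw [show m + 1 - 1 = m by ring, show m + 1 + 1 = m + 2 by ring] at h1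
      linear_combination h1
    | 1 =>
      intro m
      rw [show m + ((1 : ℕ) : ℤ) + 2 = m + 3 by push_cast; ring,
        show m + ((1 : ℕ) : ℤ) + 1 = m + 2 by push_cast; ring, aux_D1, aux_zn_one]
      apply mul_right_cancel₀ (aux_y_ne_zero hrel (m + 1))
      have h1 := hrel (m + 1)
      have h2 := hrel (m + 2)
      rw [show m + 1 - 1 = m by ring, show m + 1 + 1 = m + 2 by ring] at h1
      rw [show m + 2 - 1 = m + 1 by ring, show m + 2 + 1 = m + 3 by ring] at h2
      have h3 := aux_hz hrel (m + 1)
      rw [show m + 1 - 1 = m by ring, show m + 1 + 1 = m + 2 by ring] at h3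
      linear_combination y m * h2 + y (m + 2) * h1 - h3
    | (k + 2) =>
      intro m
      push_cast
      rw [show m + ((k : ℤ) + 2) + 2 = m + k + 4 by push_cast; ring,
        show m + ((k : ℤ) + 2) + 1 = m + k + 3 by push_cast; ring]
      have A := ih (k + 1) (by omega) m
      have B := ih k (by omega) m
      push_cast at A B
      rw [show m + ((k : ℤ) + 1) + 2 = m + k + 3 by push_cast; ring,
        show m + ((k : ℤ) + 1) + 1 = m + k + 2 by push_cast; ring] at A
      have h5 := aux_hz hrel (m + k + 3)
      have h6 := aux_hz hrel (m + k + 2)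
      rw [show m + (k : ℤ) + 3 - 1 = m + k + 2 by ring,
        show m + (k : ℤ) + 3 + 1 = m + k + 4 by ring] at h5
      rw [show m + (k : ℤ) + 2 - 1 = m + k + 1 by ring,
        show m + (k : ℤ) + 2 + 1 = m + k + 3 by ring] at h6
      have hD := aux_Drec (y := y) k
      linear_combination (-(y m)) * h5 + zElem 2 y * A - B + y (m + 1) * h6 - hD

lemma aux_Cc_one : Cc y 1 = 0 := by
  norm_num [Cc, znI]

lemma aux_Cc_two : Cc y 2 = 1 := by
  have h := aux_Cstep (y := y) 0
  have h0 : Cc y 0 = 0 := by norm_num [Cc]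
  rw [h, h0, aux_D0, aux_zn_zero, zero_add]

lemma aux_P (hrel : ∀ m : ℤ, y (m - 1) * y (m + 1) = y m ^ 2 + 1) :
    ∀ (n : ℕ) (m : ℤ), y m * y (m + ((n + 1 : ℕ) : ℤ)) =
      y (m + (((n + 1) / 2 : ℕ) : ℤ)) * y (m + (((n + 2) / 2 : ℕ) : ℤ)) + Cc y (n + 1) := by
  intro n
  induction n using Nat.strong_induction_on with
  | _ n ih =>
    match n with
    | 0 =>
      intro m
      norm_num [aux_Cc_one]
    | 1 =>
      intro m
      rw [aux_Cc_two]
      norm_num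
      have h1 := hrel (m + 1)
      rw [show m + 1 - 1 = m by ring, show m + 1 + 1 = m + 2 by ring] at h1
      linear_combination h1
    | (k + 2) =>
      intro m
      have QQ := aux_Q hrel (k + 1) m
      rw [show m + ((k + 1 : ℕ) : ℤ) + 2 = m + ((k + 2 + 1 : ℕ) : ℤ) by push_cast; ring,
        show m + ((k + 1 : ℕ) : ℤ) + 1 = m + 1 + ((k + 1 : ℕ) : ℤ) by push_cast; ring] at QQ
      have IH := ih k (by omega) (m + 1)
      rw [show (((k + 2 + 1) / 2 : ℕ) : ℤ) = (((k + 1) / 2 : ℕ) : ℤ) + 1 by omega,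
        show (((k + 2 + 2) / 2 : ℕ) : ℤ) = (((k + 2) / 2 : ℕ) : ℤ) + 1 by omega]
      rw [show m + 1 + (((k + 1) / 2 : ℕ) : ℤ) = m + ((((k + 1) / 2 : ℕ) : ℤ) + 1) by ring,
        show m + 1 + (((k + 2) / 2 : ℕ) : ℤ) = m + ((((k + 2) / 2 : ℕ) : ℤ) + 1) by ring] at IH
      have hC := aux_Cstep (y := y) (k + 1)
      rw [show k + 1 + 2 = k + 2 + 1 from rfl] at hC
      linear_combination QQ + IH - hC

end Aux2

/-- for `(b,c) = (2,2)`, with `z₀ = 1` and `z_j = 0` for `j < 0`: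
(i) `z_n y_m = y_{m-n} + y_{m+n}`;
(ii) `y_m y_{m+n} = y_{⌊m+n/2⌋} y_{⌈m+n/2⌉} + Σ_{k ≥ 1} k z_{n-2k}`. -/
theorem stmt_18 (y : ℤ → Fq) (hy : IsClusterSeq 2 2 y) (m : ℤ) (n : ℕ) (hn : 1 ≤ n) :
    znI 2 y (n : ℤ) * y m = y (m - n) + y (m + n) ∧
      y m * y (m + n) =
        y (m + ((n / 2 : ℕ) : ℤ)) * y (m + (((n + 1) / 2 : ℕ) : ℤ)) +
          ∑ k ∈ Finset.Icc 1 n, (k : Fq) * znI 2 y ((n : ℤ) - 2 * k) := by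
  obtain ⟨hy1, hy2, hex⟩ := hy
  have hrel : ∀ m : ℤ, y (m - 1) * y (m + 1) = y m ^ 2 + 1 := by
    intro m
    simpa [ite_self] using hex m
  obtain ⟨n', rfl⟩ : ∃ n', n = n' + 1 := ⟨n - 1, by omega⟩
  constructor
  · have h := aux_zn_mul_y hrel n' m
    rw [aux_znI_natCast (n' + 1)]
    push_cast
    exact h
  · have h := aux_P hrel n' m
    exact h
end
end
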